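/- arXiv:2209.03768 — 9 statements merged into one kernel-verified Lean document; each statement's English description precedes it below -/
import Mathlib

section
/- Let L be the Laplacian matrix of a continuous-time Markov chain on a finite state space V whose underlying directed graph G is strongly connected (all transition rates on edges are strictly positive). Then there exists a unique vector μ ∈ ℝ^V with L μ = 0 and ∑_{v∈V} μ_v = 1, and moreover μ_v > 0 for every v ∈ V. -/
/-!
The columns of `L` sum to zero and its off-diagonal entries are nonnegative. Hence, for
`L x = 0`, the positive part `x⁺` satisfies `L x⁺ ≥ 0` entrywise, and since the entries of
`L x⁺` also sum to zero, `x⁺` lies in the kernel too. For a nonnegative kernel vector, a zero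
entry forces zeros at all of its in-neighbours, so by strong connectivity a kernel vector that
is positive somewhere is positive everywhere. A nonzero kernel vector exists because
`1ᵀ L = 0`; a kernel vector with zero sum must vanish, which gives uniqueness.
-/

/-- The Laplacian of transition rates `ℓ`, where `ℓ u v` is the rate of the
transition from `u` to `v` : the entry in row `v`, column `u` is `ℓ u v` for
`v ≠ u`, and the diagonal entry in column `u` is `-∑_{w ≠ u} ℓ u w`.
Columns sum to zero. -/
noncomputable def CTMCLaplacian {V : Type*} [Fintype V] [DecidableEq V] (ℓ : V → V → ℝ) :
    Matrix V V ℝ :=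
  fun v u => if v = u then -∑ w ∈ Finset.univ.filter (· ≠ u), ℓ u w else ℓ u v

open Finset Matrix

namespace CTMCLaplacian

variable {V : Type*} [Fintype V] [DecidableEq V] {ℓ : V → V → ℝ}

theorem mulVec_apply (ℓ : V → V → ℝ) (x : V → ℝ) (v : V) :
    (CTMCLaplacian ℓ *ᵥ x) v =
      ∑ u ∈ univ.erase v, ℓ u v * x u - (∑ w ∈ univ.erase v, ℓ v w) * x v := by
  rw [mulVec, dotProduct, ← add_sum_erase _ _ (mem_univ v)]
  have hoff : ∀ u ∈ univ.erase v, CTMCLaplacian ℓ v u * x u = ℓ u v * x u := fun u hu => by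
    rw [CTMCLaplacian, if_neg (ne_of_mem_erase hu).symm]
  rw [sum_congr rfl hoff, CTMCLaplacian, if_pos rfl, filter_ne']
  ring

theorem one_vecMul_eq_zero (ℓ : V → V → ℝ) : 1 ᵥ* CTMCLaplacian ℓ = 0 := by
  funext u
  rw [vecMul, one_dotProduct, ← add_sum_erase _ _ (mem_univ u)]
  have hoff : ∀ v ∈ univ.erase u, CTMCLaplacian ℓ v u = ℓ u v := fun v hv => by
    rw [CTMCLaplacian, if_neg (ne_of_mem_erase hv)]
  rw [sum_congr rfl hoff, CTMCLaplacian, if_pos rfl, filter_ne']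
  simp

theorem sum_mulVec (ℓ : V → V → ℝ) (x : V → ℝ) : ∑ v, (CTMCLaplacian ℓ *ᵥ x) v = 0 := by
  rw [← one_dotProduct, dotProduct_mulVec, one_vecMul_eq_zero, zero_dotProduct]

theorem det_eq_zero [Nonempty V] (ℓ : V → V → ℝ) : (CTMCLaplacian ℓ).det = 0 :=
  exists_vecMul_eq_zero_iff.mp ⟨1, one_ne_zero, one_vecMul_eq_zero ℓ⟩

theorem mulVec_posPart_nonneg (hnn : ∀ u v, 0 ≤ ℓ u v) {x : V → ℝ}
    (hx : CTMCLaplacian ℓ *ᵥ x = 0) : 0 ≤ CTMCLaplacian ℓ *ᵥ x⁺ := by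
  intro v
  have hxv := congrFun hx v
  rw [Pi.zero_apply, mulVec_apply] at hxv
  rw [Pi.zero_apply, mulVec_apply]
  have hoff : ∑ u ∈ univ.erase v, ℓ u v * x u ≤ ∑ u ∈ univ.erase v, ℓ u v * x⁺ u :=
    sum_le_sum fun u _ => mul_le_mul_of_nonneg_left (le_posPart _) (hnn u v)
  have hoff_nonneg : 0 ≤ ∑ u ∈ univ.erase v, ℓ u v * x⁺ u :=
    sum_nonneg fun u _ => mul_nonneg (hnn u v) (posPart_nonneg _)
  rcases le_or_gt 0 (x v) with hv | hv
  · rw [Pi.posPart_apply, posPart_eq_self.mpr hv]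
    linarith
  · rw [Pi.posPart_apply, posPart_eq_zero.mpr hv.le, mul_zero, sub_zero]
    exact hoff_nonneg

theorem mulVec_posPart_eq_zero (hnn : ∀ u v, 0 ≤ ℓ u v) {x : V → ℝ}
    (hx : CTMCLaplacian ℓ *ᵥ x = 0) : CTMCLaplacian ℓ *ᵥ x⁺ = 0 := by
  have hnonneg := mulVec_posPart_nonneg hnn hx
  funext v
  exact (sum_eq_zero_iff_of_nonneg fun w _ => hnonneg w).mp (sum_mulVec ℓ x⁺) v (mem_univ v)

theorem eq_zero_of_reflTransGen (hnn : ∀ u v, 0 ≤ ℓ u v) {x : V → ℝ}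
    (hx : CTMCLaplacian ℓ *ᵥ x = 0) (hx0 : 0 ≤ x) {u v : V}
    (huv : Relation.ReflTransGen (fun a b => 0 < ℓ a b) u v) (hv : x v = 0) : x u = 0 := by
  induction huv with
  | refl => exact hv
  | @tail b c _ hbc ih =>
    refine ih ?_
    obtain rfl | hne := eq_or_ne b c
    · exact hv
    have hc := congrFun hx c
    rw [Pi.zero_apply, mulVec_apply, hv, mul_zero, sub_zero] at hc
    have hb : ℓ b c * x b = 0 :=
      (sum_eq_zero_iff_of_nonneg fun w _ => mul_nonneg (hnn w c) (hx0 w)).mp hc b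
        (mem_erase.mpr ⟨hne, mem_univ b⟩)
    exact (mul_eq_zero.mp hb).resolve_left hbc.ne'

theorem pos_of_mulVec_eq_zero (hnn : ∀ u v, 0 ≤ ℓ u v)
    (hconn : ∀ u v, Relation.ReflTransGen (fun a b => 0 < ℓ a b) u v) {x : V → ℝ}
    (hx : CTMCLaplacian ℓ *ᵥ x = 0) {u : V} (hu : 0 < x u) (v : V) : 0 < x v := by
  by_contra! hv
  have hzero : x⁺ u = 0 :=
    eq_zero_of_reflTransGen hnn (mulVec_posPart_eq_zero hnn hx) (fun w => posPart_nonneg (x w))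
      (hconn u v) (posPart_eq_zero.mpr hv)
  exact (posPart_pos hu).ne' hzero

theorem eq_zero_of_mulVec_eq_zero (hnn : ∀ u v, 0 ≤ ℓ u v)
    (hconn : ∀ u v, Relation.ReflTransGen (fun a b => 0 < ℓ a b) u v) {x : V → ℝ}
    (hx : CTMCLaplacian ℓ *ᵥ x = 0) (hsum : ∑ v, x v = 0) : x = 0 := by
  by_contra! hne
  obtain ⟨v, -, hv⟩ := exists_pos_of_sum_zero_of_exists_nonzero x hsum
    (by simpa [funext_iff] using hne)
  have hpos : 0 < ∑ w, x w := sum_pos (fun w _ => pos_of_mulVec_eq_zero hnn hconn hx hv w)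
    ⟨v, mem_univ v⟩
  exact hpos.ne' hsum

theorem exists_pos_mulVec_eq_zero [Nonempty V] (hnn : ∀ u v, 0 ≤ ℓ u v)
    (hconn : ∀ u v, Relation.ReflTransGen (fun a b => 0 < ℓ a b) u v) :
    ∃ x : V → ℝ, CTMCLaplacian ℓ *ᵥ x = 0 ∧ ∀ v, 0 < x v := by
  obtain ⟨ξ, hξ, hker⟩ := exists_mulVec_eq_zero_iff.mpr (det_eq_zero ℓ)
  obtain ⟨v, hv⟩ := Function.ne_iff.mp hξ
  rcases hv.lt_or_gt with hneg | hpos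
  · have hker' : CTMCLaplacian ℓ *ᵥ -ξ = 0 := by rw [mulVec_neg, hker, neg_zero]
    exact ⟨-ξ, hker', pos_of_mulVec_eq_zero hnn hconn hker' (neg_pos.mpr hneg)⟩
  · exact ⟨ξ, hker, pos_of_mulVec_eq_zero hnn hconn hker hpos⟩

end CTMCLaplacian


open CTMCLaplacian

theorem stmt2_general {V : Type*} [Fintype V] [DecidableEq V] [Nonempty V] (ℓ : V → V → ℝ)
    (hnn : ∀ u v : V, 0 ≤ ℓ u v)
    (hconn : ∀ u v : V, Relation.ReflTransGen (fun a b => 0 < ℓ a b) u v) :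
    (∃! μ : V → ℝ, (CTMCLaplacian ℓ).mulVec μ = 0 ∧ ∑ v : V, μ v = 1) ∧
    (∀ μ : V → ℝ, (CTMCLaplacian ℓ).mulVec μ = 0 ∧ ∑ v : V, μ v = 1 → ∀ v : V, 0 < μ v) := by
  obtain ⟨x, hx, hxpos⟩ := exists_pos_mulVec_eq_zero hnn hconn
  have hsum_pos : 0 < ∑ v, x v := sum_pos (fun v _ => hxpos v) univ_nonempty
  refine ⟨⟨(∑ v, x v)⁻¹ • x, ⟨?_, ?_⟩, ?_⟩, ?_⟩
  · rw [mulVec_smul, hx, smul_zero]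
  · simp only [Pi.smul_apply, smul_eq_mul, ← mul_sum, inv_mul_cancel₀ hsum_pos.ne']
  · rintro ν ⟨hν, hν_sum⟩
    refine sub_eq_zero.mp (eq_zero_of_mulVec_eq_zero hnn hconn ?_ ?_)
    · rw [mulVec_sub, hν, mulVec_smul, hx, smul_zero, sub_zero]
    · simp only [Pi.sub_apply, Pi.smul_apply, smul_eq_mul, sum_sub_distrib, ← mul_sum, hν_sum,
        inv_mul_cancel₀ hsum_pos.ne', sub_self]
  · rintro μ ⟨hμ, hμ_sum⟩
    obtain ⟨u, -, hu⟩ := exists_lt_of_sum_lt (s := univ) (f := 0) (g := μ) (by simp [hμ_sum])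
    exact pos_of_mulVec_eq_zero hnn hconn hμ hu

/-- An irreducible CTMC on a finite state space (nonnegative rates, no
self-loops, strongly connected through positive-rate transitions) has a unique
stationary distribution, and it is strictly positive. -/
theorem stmt2 {V : Type*} [Fintype V] [DecidableEq V] [Nonempty V] (ℓ : V → V → ℝ)
    (hnn : ∀ u v : V, 0 ≤ ℓ u v) (hself : ∀ u : V, ℓ u u = 0)
    (hconn : ∀ u v : V, Relation.ReflTransGen (fun a b => 0 < ℓ a b) u v) :
    (∃! μ : V → ℝ, (CTMCLaplacian ℓ).mulVec μ = 0 ∧ ∑ v : V, μ v = 1) ∧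
    (∀ μ : V → ℝ, (CTMCLaplacian ℓ).mulVec μ = 0 ∧ ∑ v : V, μ v = 1 → ∀ v : V, 0 < μ v) :=
  stmt2_general ℓ hnn hconn
end

section
/- Let L be a generalized Laplacian on a finite vertex set V and suppose that for some vertex v ∈ V the matrix L^{(v)} (L with its v-th row replaced by all 1's) is invertible. Then for every other vertex u ∈ V the matrix L^{(u)} is also invertible; in fact det(L^{(v)}) = det(L^{(u)}). -/
/-!
Replace row `j` of `L.updateRow i c` by the sum of all its rows: this keeps the determinant, and
since the rows of `L` sum to zero the new row is `c - L i`. The `c` part gives a repeated row, and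
the `- L i` part is `L.updateRow j c` with rows `i` and `j` swapped, whence the same determinant.
-/

namespace Matrix

variable {n R : Type*} [Fintype n] [DecidableEq n] [CommRing R]

theorem det_updateRow_updateRow_swap (M : Matrix n n R) {i j : n} (hij : i ≠ j) (a b : n → R) :
    ((M.updateRow i a).updateRow j b).det = -((M.updateRow i b).updateRow j a).det := by
  have hperm : ((M.updateRow i b).updateRow j a).submatrix (Equiv.swap i j) id =
      (M.updateRow i a).updateRow j b := by
    ext k l
    rcases eq_or_ne k i with rfl | hki
    · simp [hij]
    rcases eq_or_ne k j with rfl | hkj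
    · simp [hij]
    · simp [Equiv.swap_apply_of_ne_of_ne hki hkj, hki, hkj]
  rw [← hperm, det_permute, Equiv.Perm.sign_swap hij]
  simp

theorem det_updateRow_eq_of_sum_rows_eq_zero {L : Matrix n n R} (hL : ∑ k, L k = 0)
    (c : n → R) (i j : n) : (L.updateRow i c).det = (L.updateRow j c).det := by
  rcases eq_or_ne i j with rfl | hij
  · rfl
  set A := L.updateRow i c
  have hsum : ∑ k, A k = c - L i := by
    have hrest := Finset.sum_eq_add_sum_sdiff_singleton_of_mem (Finset.mem_univ i) L
    rw [hL, eq_comm, add_eq_zero_iff_eq_neg'] at hrest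
    have hA : ∑ k, A k = c + ∑ k ∈ Finset.univ \ {i}, L k :=
      Finset.sum_update_of_mem (Finset.mem_univ i) L c
    rw [hA, hrest, sub_eq_add_neg]
  have hrep : (A.updateRow j c).det = 0 :=
    det_zero_of_row_eq hij (by simp [A, hij])
  calc A.det = (A.updateRow j (∑ k, (1 : n → R) k • A k)).det := by
        rw [det_updateRow_sum]; simp
    _ = (A.updateRow j c).det - (A.updateRow j (L i)).det := by
        simp only [Pi.one_apply, one_smul, hsum, sub_eq_add_neg, det_updateRow_add,
          ← neg_one_smul R (L i), det_updateRow_smul]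
        ring
    _ = (L.updateRow j c).det := by
        rw [hrep, det_updateRow_updateRow_swap _ hij, updateRow_eq_self]
        ring

end Matrix

/-- For a generalized Laplacian `L` (a real matrix all of whose columns sum to
zero), if `L` with its `v`-row replaced by all ones is invertible for some `v`,
then the same holds for every row `u`; in fact all these determinants agree. -/
theorem stmt4 {V : Type*} [Fintype V] [DecidableEq V] (L : Matrix V V ℝ)
    (hcol : ∀ u : V, ∑ v : V, L v u = 0) (v : V)
    (h : IsUnit (L.updateRow v (1 : V → ℝ)).det) :
    ∀ u : V, IsUnit (L.updateRow u (1 : V → ℝ)).det ∧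
      (L.updateRow v (1 : V → ℝ)).det = (L.updateRow u (1 : V → ℝ)).det := by
  have hrows : ∑ w, L w = 0 := funext fun u => (Finset.sum_apply u _ _).trans (hcol u)
  intro u
  have hdet := Matrix.det_updateRow_eq_of_sum_rows_eq_zero hrows 1 v u
  exact ⟨hdet ▸ h, hdet⟩
end

section
/- Let L be a generalized Laplacian on a finite vertex set V such that det(L^{(v)}) ≠ 0 for some (equivalently, every) v ∈ V. Then there exists a unique vector μ ∈ ℝ^V with L μ = 0 and ∑_{v∈V} μ_v = 1, and this μ is, for every v ∈ V, the unique solution of L^{(v)} μ = e_v, where e_v is the standard basis vector. -/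
/-- Key equivalence: the `v`-modified system characterizes stationarity. -/
lemma aux_equiv {V : Type*} [Fintype V] [DecidableEq V] (L : Matrix V V ℝ)
    (hcol : ∀ u : V, ∑ v : V, L v u = 0) (v : V) (x : V → ℝ) :
    (L.updateRow v (1 : V → ℝ)).mulVec x = Pi.single v 1 ↔
      (L.mulVec x = 0 ∧ ∑ w : V, x w = 1) := by
  have hval : ∀ w, (L.updateRow v (1 : V → ℝ)).mulVec x w =
      if w = v then ∑ u, x u else L.mulVec x w := by
    intro w
    by_cases hw : w = v
    · subst hw
      simp [Matrix.mulVec, dotProduct, Matrix.updateRow_self]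
    · simp [Matrix.mulVec, dotProduct, Matrix.updateRow_ne hw, hw]
  constructor
  · intro h
    have hsum : ∑ u, x u = 1 := by
      have := congrFun h v
      rw [hval] at this
      simpa using this
    have hne : ∀ w, w ≠ v → L.mulVec x w = 0 := by
      intro w hw
      have := congrFun h w
      rw [hval] at this
      simpa [hw, Pi.single_apply] using this
    have htot : ∑ w, L.mulVec x w = 0 := by
      have : ∑ w, L.mulVec x w = ∑ u, (∑ w, L w u) * x u := by
        simp only [Matrix.mulVec, dotProduct, Finset.sum_mul]
        rw [Finset.sum_comm]
      rw [this]
      simp [hcol]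
    have hv : L.mulVec x v = 0 := by
      have h1 : ∑ w, L.mulVec x w = L.mulVec x v + ∑ w ∈ Finset.univ.erase v, L.mulVec x w := by
        rw [Finset.add_sum_erase _ _ (Finset.mem_univ v)]
      have h2 : ∑ w ∈ Finset.univ.erase v, L.mulVec x w = 0 :=
        Finset.sum_eq_zero fun w hw => hne w (Finset.ne_of_mem_erase hw)
      rw [htot] at h1
      linarith [h1, h2]
    refine ⟨funext fun w => ?_, hsum⟩
    by_cases hw : w = v
    · subst hw; simpa using hv
    · simpa using hne w hw
  · rintro ⟨h0, h1⟩
    funext w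
    rw [hval]
    by_cases hw : w = v
    · subst hw; simp [h1]
    · simp [hw, Pi.single_apply, congrFun h0 w]

/-- For a generalized Laplacian `L` (columns summing to zero) with
`det L^{(v₀)} ≠ 0`, there is a unique stationary distribution `μ`
(`L μ = 0`, entries summing to `1`), and for every `v` this `μ` is the unique
solution of `L^{(v)} x = e_v`, where `L^{(v)}` is `L` with its `v`-row replaced
by all ones. -/
theorem stmt5 {V : Type*} [Fintype V] [DecidableEq V] (L : Matrix V V ℝ)
    (hcol : ∀ u : V, ∑ v : V, L v u = 0) (v0 : V)
    (hdet : (L.updateRow v0 (1 : V → ℝ)).det ≠ 0) :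
    ∃ μ : V → ℝ, (L.mulVec μ = 0 ∧ ∑ v : V, μ v = 1) ∧
      (∀ μ' : V → ℝ, L.mulVec μ' = 0 ∧ ∑ v : V, μ' v = 1 → μ' = μ) ∧
      (∀ v : V, ∀ x : V → ℝ,
        (L.updateRow v (1 : V → ℝ)).mulVec x = Pi.single v 1 ↔ x = μ) := by
  set M := L.updateRow v0 (1 : V → ℝ) with hM
  have hu : IsUnit M.det := isUnit_iff_ne_zero.mpr hdet
  set μ := M⁻¹.mulVec (Pi.single v0 1) with hμ
  have hMμ : M.mulVec μ = Pi.single v0 1 := by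
    rw [hμ, Matrix.mulVec_mulVec, Matrix.mul_nonsing_inv _ hu, Matrix.one_mulVec]
  have hstat : L.mulVec μ = 0 ∧ ∑ w : V, μ w = 1 := (aux_equiv L hcol v0 μ).mp hMμ
  have huniq : ∀ μ' : V → ℝ, L.mulVec μ' = 0 ∧ ∑ v : V, μ' v = 1 → μ' = μ := by
    intro μ' h'
    have h1 : M.mulVec μ' = Pi.single v0 1 := (aux_equiv L hcol v0 μ').mpr h'
    have : M⁻¹.mulVec (M.mulVec μ') = M⁻¹.mulVec (M.mulVec μ) := by rw [h1, hMμ]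
    rwa [Matrix.mulVec_mulVec, Matrix.mulVec_mulVec, Matrix.nonsing_inv_mul _ hu,
      Matrix.one_mulVec, Matrix.one_mulVec] at this
  refine ⟨μ, hstat, huniq, fun v x => ?_⟩
  constructor
  · intro h
    exact huniq x ((aux_equiv L hcol v x).mp h)
  · intro h
    rw [h]
    exact (aux_equiv L hcol v μ).mpr hstat
end

section
/- Let L be a generalized Laplacian on V with unique stationary distribution μ (assuming det(L^{(v)}) ≠ 0). Fix an ordered pair (u*, v*) of distinct vertices and define the perturbed matrix L(ε) = L + ε(E_{v*u*} − E_{u*u*}), where E_{ab} is the matrix with a single 1 in row a, column b. Then for all ε in a neighborhood of 0 the matrix L(ε)^{(u*)} is invertible, the stationary distribution μ(ε) of L(ε) depends differentiably on ε, and its derivative δ = dμ(ε)/dε at ε = 0 satisfies L^{(u*)} δ = −μ_{u*} e_{v*}. -/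
/-!
Write `A = L^{(u*)}` and `B = E_{v*u*}`. Since `u* ≠ v*`, replacing row `u*` kills the `-E_{u*u*}`
part of the perturbation, so `L(ε)^{(u*)} = A + ε B` and `μ(ε) = (A + ε B)⁻¹ e_{u*}` near `0`.
Subtracting the equations `(A + ε B) μ(ε) = e_{u*} = (A + ε₀ B) μ(ε₀)` gives the resolvent identity
`μ(ε) - μ(ε₀) = -(ε - ε₀) (A + ε₀ B)⁻¹ B μ(ε)`, so by continuity of `μ` the difference quotients
converge to `-(A + ε₀ B)⁻¹ B μ(ε₀)`. At `ε₀ = 0` this gives `A δ = -B μ = -μ_{u*} e_{v*}`.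
-/

open Filter Topology

namespace Matrix

variable {n : Type*} [DecidableEq n]

theorem updateRow_add_smul_single_sub_single {R : Type*} [Ring R] {u v : n} (huv : u ≠ v)
    (L : Matrix n n R) (r : n → R) (c : R) :
    (L + c • (single v u 1 - single u u 1)).updateRow u r = L.updateRow u r + c • single v u 1 := by
  ext i j
  rcases eq_or_ne i u with rfl | hi
  · simp [huv.symm]
  · simp [updateRow_ne hi, single_apply, hi.symm]

variable [Fintype n]

theorem single_one_mulVec {R : Type*} [Semiring R] (i j : n) (x : n → R) :
    single i j (1 : R) *ᵥ x = x j • Pi.single i 1 := by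
  rw [single_mulVec, one_mul, ← Pi.single_smul', smul_eq_mul, mul_one]; rfl

section Field

variable {K : Type*} [Field K] {A : Matrix n n K}

theorem nonsing_inv_mulVec_mulVec (hA : A.det ≠ 0) (x : n → K) : A⁻¹ *ᵥ (A *ᵥ x) = x := by
  rw [mulVec_mulVec, nonsing_inv_mul _ (isUnit_iff_ne_zero.2 hA), one_mulVec]

theorem mulVec_nonsing_inv_mulVec (hA : A.det ≠ 0) (x : n → K) : A *ᵥ (A⁻¹ *ᵥ x) = x := by
  rw [mulVec_mulVec, mul_nonsing_inv _ (isUnit_iff_ne_zero.2 hA), one_mulVec]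

end Field

variable {𝕜 : Type*} [NontriviallyNormedField 𝕜] (A B : Matrix n n 𝕜)

theorem continuous_det_add_smul : Continuous fun ε : 𝕜 => (A + ε • B).det := by
  fun_prop

theorem continuousAt_inv_add_smul {ε₀ : 𝕜} (h : (A + ε₀ • B).det ≠ 0) :
    ContinuousAt (fun ε : 𝕜 => (A + ε • B)⁻¹) ε₀ := by
  refine (continuousAt_matrix_inv _ ?_).comp (by fun_prop)
  simp only [Ring.inverse_eq_inv']
  exact continuousAt_inv₀ h

theorem inv_add_smul_mulVec_eq_add {b : n → 𝕜} {ε₀ ε : 𝕜} (h₀ : (A + ε₀ • B).det ≠ 0)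
    (h : (A + ε • B).det ≠ 0) :
    (A + ε₀ • B)⁻¹ *ᵥ b =
      (A + ε • B)⁻¹ *ᵥ b + (ε - ε₀) • ((A + ε₀ • B)⁻¹ *ᵥ B *ᵥ ((A + ε • B)⁻¹ *ᵥ b)) := by
  have hsplit : A + ε • B = (A + ε₀ • B) + (ε - ε₀) • B := by
    rw [add_assoc, ← add_smul, add_sub_cancel]
  have hy := mulVec_nonsing_inv_mulVec h b
  generalize (A + ε • B)⁻¹ *ᵥ b = y at hy ⊢
  rw [← hy, hsplit, add_mulVec, mulVec_add, nonsing_inv_mulVec_mulVec h₀, smul_mulVec,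
    mulVec_smul]

theorem hasDerivAt_inv_add_smul_mulVec (b : n → 𝕜) {ε₀ : 𝕜} (h : (A + ε₀ • B).det ≠ 0) :
    HasDerivAt (fun ε : 𝕜 => (A + ε • B)⁻¹ *ᵥ b)
      (-((A + ε₀ • B)⁻¹ *ᵥ B *ᵥ ((A + ε₀ • B)⁻¹ *ᵥ b))) ε₀ := by
  set x : 𝕜 → n → 𝕜 := fun ε => (A + ε • B)⁻¹ *ᵥ b
  have hx : ContinuousAt x ε₀ :=
    (continuous_id.matrix_mulVec continuous_const).continuousAt.comp
      (continuousAt_inv_add_smul A B h)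
  have hslope : ∀ᶠ ε in 𝓝[≠] ε₀, -((A + ε₀ • B)⁻¹ *ᵥ B *ᵥ x ε) = slope x ε₀ ε := by
    filter_upwards [nhdsWithin_le_nhds ((continuous_det_add_smul A B).continuousAt.eventually_ne h),
      self_mem_nhdsWithin] with ε hε hne
    simp only [slope_def_module, x]
    rw [inv_add_smul_mulVec_eq_add A B (b := b) h hε, sub_add_cancel_left, smul_neg,
      inv_smul_smul₀ (sub_ne_zero.2 hne)]
  rw [hasDerivAt_iff_tendsto_slope]
  refine (Tendsto.mono_left ?_ nhdsWithin_le_nhds).congr' hslope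
  exact ((continuous_const.matrix_mulVec (continuous_const.matrix_mulVec continuous_id)).neg.tendsto
    _).comp hx

end Matrix

open Matrix

theorem stmt6_general {V : Type*} [Fintype V] [DecidableEq V] (L : Matrix V V ℝ)
    (ustar vstar : V) (hne : ustar ≠ vstar)
    (hdet : (L.updateRow ustar (1 : V → ℝ)).det ≠ 0)
    (μ0 : V → ℝ) (hμ0 : (L.updateRow ustar (1 : V → ℝ)).mulVec μ0 = Pi.single ustar 1) :
    ∃ μ : ℝ → V → ℝ, ∃ δ : V → ℝ,
      (∀ᶠ ε in nhds (0 : ℝ),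
        ((L + ε • (Matrix.single vstar ustar (1 : ℝ) -
            Matrix.single ustar ustar (1 : ℝ))).updateRow ustar
            (1 : V → ℝ)).det ≠ 0 ∧
        ((L + ε • (Matrix.single vstar ustar (1 : ℝ) -
            Matrix.single ustar ustar (1 : ℝ))).updateRow ustar
            (1 : V → ℝ)).mulVec (μ ε) = Pi.single ustar 1 ∧
        DifferentiableAt ℝ μ ε) ∧
      HasDerivAt μ δ 0 ∧
      (L.updateRow ustar (1 : V → ℝ)).mulVec δ = (-(μ0 ustar)) • (Pi.single vstar 1 : V → ℝ) := by
  set A := L.updateRow ustar (1 : V → ℝ)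
  set B : Matrix V V ℝ := single vstar ustar 1
  have hA : (A + (0 : ℝ) • B).det ≠ 0 := by rwa [zero_smul, add_zero]
  have hAμ0 : A⁻¹ *ᵥ Pi.single ustar 1 = μ0 := by rw [← hμ0, nonsing_inv_mulVec_mulVec hdet]
  refine ⟨fun ε => (A + ε • B)⁻¹ *ᵥ Pi.single ustar 1, -(A⁻¹ *ᵥ B *ᵥ μ0), ?_, ?_, ?_⟩
  · filter_upwards [(continuous_det_add_smul A B).continuousAt.eventually_ne hA] with ε hε
    rw [updateRow_add_smul_single_sub_single hne]
    exact ⟨hε, mulVec_nonsing_inv_mulVec hε _,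
      (hasDerivAt_inv_add_smul_mulVec A B _ hε).differentiableAt⟩
  · simpa only [zero_smul, add_zero, hAμ0] using
      hasDerivAt_inv_add_smul_mulVec A B (Pi.single ustar 1) hA
  · rw [mulVec_neg, mulVec_nonsing_inv_mulVec hdet, single_one_mulVec, neg_smul]

/-- Sensitivity of the stationary distribution of a generalized Laplacian `L`
(columns summing to zero, `det L^{(u*)} ≠ 0`) to the perturbation
`L(ε) = L + ε (E_{v*u*} - E_{u*u*})`: for all `ε` near `0` the matrix
`L(ε)^{(u*)}` is invertible, the stationary distribution `μ(ε)` (characterized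
by `L(ε)^{(u*)} μ(ε) = e_{u*}`) depends differentiably on `ε`, and its
derivative `δ` at `ε = 0` satisfies `L^{(u*)} δ = -μ_{u*} e_{v*}`. -/
theorem stmt6 {V : Type*} [Fintype V] [DecidableEq V] (L : Matrix V V ℝ)
    (hcol : ∀ u : V, ∑ v : V, L v u = 0) (ustar vstar : V) (hne : ustar ≠ vstar)
    (hdet : (L.updateRow ustar (1 : V → ℝ)).det ≠ 0)
    (μ0 : V → ℝ) (hμ0 : (L.updateRow ustar (1 : V → ℝ)).mulVec μ0 = Pi.single ustar 1) :
    ∃ μ : ℝ → V → ℝ, ∃ δ : V → ℝ,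
      (∀ᶠ ε in nhds (0 : ℝ),
        ((L + ε • (Matrix.single vstar ustar (1 : ℝ) -
            Matrix.single ustar ustar (1 : ℝ))).updateRow ustar
            (1 : V → ℝ)).det ≠ 0 ∧
        ((L + ε • (Matrix.single vstar ustar (1 : ℝ) -
            Matrix.single ustar ustar (1 : ℝ))).updateRow ustar
            (1 : V → ℝ)).mulVec (μ ε) = Pi.single ustar 1 ∧
        DifferentiableAt ℝ μ ε) ∧
      HasDerivAt μ δ 0 ∧
      (L.updateRow ustar (1 : V → ℝ)).mulVec δ = (-(μ0 ustar)) • (Pi.single vstar 1 : V → ℝ) :=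
  stmt6_general L ustar vstar hne hdet μ0 hμ0
end

section
/- Let L be the Laplacian of an irreducible continuous-time Markov chain on a finite state space V with stationary distribution μ, and let j* = (u*, v*) be an edge of the underlying graph. Then the response vector δ = dμ(ε)/dε|_{ε=0} (for the perturbation L(ε) = L + ε(E_{v*u*} − E_{u*u*})) satisfies δ_{u*} < 0 and δ_{v*} > 0, for every choice of positive transition rates. -/
/-!
Differentiating `(L + ε A) μ(ε) = 0` and `∑ μ(ε) = 1` at `ε = 0` gives
`L δ = μ_{u*} (e_{u*} - e_{v*})` and `∑ δ = 0`, where `μ = μ(0)` is positive: `|μ| + μ` is again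
a nonnegative stationary vector, and the support of such a vector is closed under edges.
Writing `δ = y μ`, the equation becomes `∑_z ℓ_{zw} μ_z (y_z - y_w) = (L δ)_w`, a weighted graph
Laplacian of `y` which is `≥ 0` away from `v*` and `≤ 0` away from `u*`. By the maximum
principle on the strongly connected graph, `y` is maximal at `v*` and minimal at `u*`; as
`∑ μ y = 0` and `y ≠ 0`, this forces `y_{v*} > 0 > y_{u*}`.
-/

open Finset Matrix Filter Topology

section Weighted

variable {V : Type*} [Fintype V]

theorem maximum_principle {c : V → V → ℝ} (hc : ∀ u v, 0 ≤ c u v)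
    (hconn : ∀ u v, Relation.ReflTransGen (fun p q => 0 < c p q) u v) {y : V → ℝ} {b : V}
    (hy : ∀ w ≠ b, 0 ≤ ∑ z, c z w * (y z - y w)) (w : V) : y w ≤ y b := by
  have : Nonempty V := ⟨w⟩
  obtain ⟨m, hm⟩ := Finite.exists_max y
  -- Along a path from `b`, maximality at a vertex `≠ b` propagates back to its predecessor.
  suffices ∀ v, Relation.ReflTransGen (fun p q => 0 < c p q) b v → y v = y m → y b = y m from
    this m (hconn b m) rfl ▸ hm w
  intro v hbv
  induction hbv with
  | refl => exact id
  | @tail u v _ huv ih =>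
    intro hv
    by_cases hvb : v = b
    · exact hvb ▸ hv
    have hterm : ∀ z, c z v * (y z - y v) ≤ 0 := fun z =>
      mul_nonpos_of_nonneg_of_nonpos (hc z v) (sub_nonpos.2 (hv ▸ hm z))
    have hzero := (sum_eq_zero_iff_of_nonpos fun z _ => hterm z).1
      (le_antisymm (sum_nonpos fun z _ => hterm z) (hy v hvb)) u (mem_univ u)
    rw [mul_eq_zero, sub_eq_zero, hv] at hzero
    exact ih (hzero.resolve_left huv.ne')

lemma pos_of_forall_div_le {x : V → ℝ} (hpos : ∀ v, 0 < x v) {δ : V → ℝ} (hsum : ∑ v, δ v = 0)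
    (hδ : δ ≠ 0) {b : V} (hmax : ∀ w, δ w / x w ≤ δ b / x b) : 0 < δ b := by
  by_contra! hb
  have hnonpos : ∀ w, δ w ≤ 0 := fun w => by
    have := (hmax w).trans (div_nonpos_of_nonpos_of_nonneg hb (hpos b).le)
    rwa [div_le_iff₀ (hpos w), zero_mul] at this
  exact hδ (funext fun w => (sum_eq_zero_iff_of_nonpos fun v _ => hnonpos v).1 hsum w (mem_univ w))

end Weighted

section Derivative

variable {V : Type*} [Fintype V] {μ : ℝ → V → ℝ} {δ : V → ℝ} {t : ℝ}

lemma hasDerivAt_add_smul_mulVec (L A : Matrix V V ℝ) (hμ : HasDerivAt μ δ t) :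
    HasDerivAt (fun ε => (L + ε • A) *ᵥ μ ε) (L *ᵥ δ + A *ᵥ μ t + t • (A *ᵥ δ)) t := by
  have hlin : ∀ M : Matrix V V ℝ, HasDerivAt (fun ε => M *ᵥ μ ε) (M *ᵥ δ) t := fun M =>
    (LinearMap.toContinuousLinearMap (mulVecLin M)).hasFDerivAt.comp_hasDerivAt t hμ
  have hfun : (fun ε => (L + ε • A) *ᵥ μ ε) = fun ε => L *ᵥ μ ε + ε • (A *ᵥ μ ε) := by
    funext ε
    rw [add_mulVec, smul_mulVec]
  rw [hfun]
  exact ((hlin L).add ((hasDerivAt_id' t).smul (hlin A))).congr_deriv (by rw [one_smul]; abel)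

lemma mulVec_add_mulVec_eq_zero_of_hasDerivAt {L A : Matrix V V ℝ}
    (hμ : ∀ᶠ ε in 𝓝 0, (L + ε • A) *ᵥ μ ε = 0) (hδ : HasDerivAt μ δ 0) :
    L *ᵥ δ + A *ᵥ μ 0 = 0 := by
  simpa using (hasDerivAt_add_smul_mulVec L A hδ).unique
    ((hasDerivAt_const 0 0).congr_of_eventuallyEq hμ)

lemma sum_eq_zero_of_hasDerivAt {c : ℝ} (hμ : ∀ᶠ ε in 𝓝 t, ∑ v, μ ε v = c)
    (hδ : HasDerivAt μ δ t) : ∑ v, δ v = 0 :=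
  (HasDerivAt.fun_sum fun v _ => hasDerivAt_pi.1 hδ v).unique
    ((hasDerivAt_const t c).congr_of_eventuallyEq hμ)

end Derivative

section CTMC

variable {V : Type*} [Fintype V] [DecidableEq V] {ℓ : V → V → ℝ}

lemma CTMCLaplacian_apply (hself : ∀ u, ℓ u u = 0) (v u : V) :
    CTMCLaplacian ℓ v u = ℓ u v - if v = u then ∑ w, ℓ u w else 0 := by
  unfold CTMCLaplacian
  split_ifs with h
  · subst h
    rw [filter_ne', sum_erase _ (hself v), hself, zero_sub]
  · rw [sub_zero]

lemma CTMCLaplacian_mulVec_apply (hself : ∀ u, ℓ u u = 0) (x : V → ℝ) (w : V) :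
    (CTMCLaplacian ℓ *ᵥ x) w = ∑ z, ℓ z w * x z - x w * ∑ z, ℓ w z := by
  simp only [mulVec, dotProduct, CTMCLaplacian_apply hself, sub_mul, ite_mul, zero_mul,
    sum_sub_distrib, sum_ite_eq, mem_univ, if_true, mul_comm (x w)]

lemma sum_CTMCLaplacian_mulVec (hself : ∀ u, ℓ u u = 0) (x : V → ℝ) :
    ∑ w, (CTMCLaplacian ℓ *ᵥ x) w = 0 := by
  simp only [CTMCLaplacian_mulVec_apply hself, sum_sub_distrib, mul_sum]
  rw [sum_comm, sub_eq_zero]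
  exact sum_congr rfl fun _ _ => sum_congr rfl fun _ _ => mul_comm _ _

lemma CTMCLaplacian_mulVec_eq_zero_iff (hself : ∀ u, ℓ u u = 0) {x : V → ℝ} :
    CTMCLaplacian ℓ *ᵥ x = 0 ↔ ∀ w, ∑ z, ℓ z w * x z = x w * ∑ z, ℓ w z := by
  simp only [funext_iff, CTMCLaplacian_mulVec_apply hself, Pi.zero_apply, sub_eq_zero]

lemma CTMCLaplacian_mulVec_abs (hnn : ∀ u v, 0 ≤ ℓ u v) (hself : ∀ u, ℓ u u = 0)
    {x : V → ℝ} (hx : CTMCLaplacian ℓ *ᵥ x = 0) : CTMCLaplacian ℓ *ᵥ |x| = 0 := by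
  have hinflow : ∀ w, 0 ≤ (CTMCLaplacian ℓ *ᵥ |x|) w := fun w => by
    rw [CTMCLaplacian_mulVec_apply hself, sub_nonneg, Pi.abs_apply,
      ← abs_of_nonneg (sum_nonneg fun z _ => hnn w z), ← abs_mul,
      ← (CTMCLaplacian_mulVec_eq_zero_iff hself).1 hx w]
    refine (abs_sum_le_sum_abs _ _).trans_eq (sum_congr rfl fun z _ => ?_)
    rw [abs_mul, abs_of_nonneg (hnn z w), Pi.abs_apply]
  funext w
  exact (sum_eq_zero_iff_of_nonneg fun w _ => hinflow w).1
    (sum_CTMCLaplacian_mulVec hself _) w (mem_univ w)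

lemma pos_of_reflTransGen (hnn : ∀ u v, 0 ≤ ℓ u v) (hself : ∀ u, ℓ u u = 0) {x : V → ℝ}
    (hx0 : 0 ≤ x) (hx : CTMCLaplacian ℓ *ᵥ x = 0) {u v : V}
    (huv : Relation.ReflTransGen (fun a b => 0 < ℓ a b) u v) (hu : 0 < x u) : 0 < x v := by
  induction huv with
  | refl => exact hu
  | @tail m w _ hmw ih =>
    have hinflow : 0 < ∑ z, ℓ z w * x z :=
      (mul_pos hmw ih).trans_le
        (single_le_sum (fun z _ => mul_nonneg (hnn z w) (hx0 z)) (mem_univ m))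
    rw [(CTMCLaplacian_mulVec_eq_zero_iff hself).1 hx w] at hinflow
    exact pos_of_mul_pos_left hinflow (sum_nonneg fun z _ => hnn w z)

lemma pos_of_mulVec_eq_zero (hnn : ∀ u v, 0 ≤ ℓ u v) (hself : ∀ u, ℓ u u = 0)
    (hconn : ∀ u v, Relation.ReflTransGen (fun a b => 0 < ℓ a b) u v) {x : V → ℝ}
    (hx : CTMCLaplacian ℓ *ᵥ x = 0) (hsum : 0 < ∑ v, x v) (v : V) : 0 < x v := by
  obtain ⟨a, -, ha⟩ := exists_lt_of_sum_lt (hsum.trans_eq' sum_const_zero.symm)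
  -- `|x| + x` is a nonnegative kernel vector, positive at `a`, hence positive everywhere.
  have hp0 : 0 ≤ |x| + x := fun w => neg_le_iff_add_nonneg'.1 (neg_abs_le (x w))
  have hp : CTMCLaplacian ℓ *ᵥ (|x| + x) = 0 := by
    rw [mulVec_add, CTMCLaplacian_mulVec_abs hnn hself hx, hx, add_zero]
  have hpv := pos_of_reflTransGen hnn hself hp0 hp (hconn a v)
    (add_pos_of_nonneg_of_pos (abs_nonneg _) ha)
  by_contra! hv
  simp [abs_of_nonpos hv] at hpv

lemma CTMCLaplacian_mulVec_apply_eq_sum_div (hself : ∀ u, ℓ u u = 0) {x : V → ℝ}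
    (hx : CTMCLaplacian ℓ *ᵥ x = 0) (hx0 : ∀ v, x v ≠ 0) (δ : V → ℝ) (w : V) :
    (CTMCLaplacian ℓ *ᵥ δ) w = ∑ z, ℓ z w * x z * (δ z / x z - δ w / x w) := by
  have hterm : ∀ z, ℓ z w * x z * (δ z / x z - δ w / x w) =
      ℓ z w * δ z - ℓ z w * x z * (δ w / x w) := fun z => by
    rw [mul_sub, mul_assoc, mul_div_cancel₀ _ (hx0 z)]
  rw [sum_congr rfl fun z _ => hterm z, sum_sub_distrib, ← sum_mul,
    (CTMCLaplacian_mulVec_eq_zero_iff hself).1 hx w, CTMCLaplacian_mulVec_apply hself]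
  field_simp [hx0 w]

lemma div_le_div_of_mulVec_nonneg (hnn : ∀ u v, 0 ≤ ℓ u v) (hself : ∀ u, ℓ u u = 0)
    (hconn : ∀ u v, Relation.ReflTransGen (fun a b => 0 < ℓ a b) u v) {x : V → ℝ}
    (hx : CTMCLaplacian ℓ *ᵥ x = 0) (hpos : ∀ v, 0 < x v) {δ : V → ℝ} {b : V}
    (hδ : ∀ w ≠ b, 0 ≤ (CTMCLaplacian ℓ *ᵥ δ) w) (w : V) : δ w / x w ≤ δ b / x b :=
  maximum_principle (fun u v => mul_nonneg (hnn u v) (hpos u).le)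
    (fun u v => Relation.ReflTransGen.mono (fun a _ hab => mul_pos hab (hpos a)) u v (hconn u v))
    (fun w hw => (hδ w hw).trans_eq
      (CTMCLaplacian_mulVec_apply_eq_sum_div hself hx (fun v => (hpos v).ne') δ w)) w

end CTMC

/-- For an irreducible CTMC with positive rates, the response vector
`δ = dμ(ε)/dε|₀` of the stationary distribution to the perturbation
`L(ε) = L + ε (E_{v*u*} - E_{u*u*})` of an edge `(u*, v*)` satisfies
`δ_{u*} < 0` and `δ_{v*} > 0`. -/
theorem stmt7 {V : Type*} [Fintype V] [DecidableEq V] (ℓ : V → V → ℝ)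
    (hnn : ∀ u v : V, 0 ≤ ℓ u v) (hself : ∀ u : V, ℓ u u = 0)
    (hconn : ∀ u v : V, Relation.ReflTransGen (fun a b => 0 < ℓ a b) u v)
    (ustar vstar : V) (hedge : 0 < ℓ ustar vstar)
    (μ : ℝ → V → ℝ) (δ : V → ℝ)
    (hμ : ∀ᶠ ε in nhds (0 : ℝ),
      (CTMCLaplacian ℓ + ε • (Matrix.single vstar ustar (1 : ℝ) -
          Matrix.single ustar ustar (1 : ℝ))).mulVec (μ ε) = 0 ∧
      ∑ v : V, μ ε v = 1)
    (hδ : HasDerivAt μ δ 0) :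
    δ ustar < 0 ∧ 0 < δ vstar := by
  have huv : ustar ≠ vstar := by
    rintro rfl
    exact hedge.ne' (hself ustar)
  obtain ⟨hstat, hmass⟩ := hμ.self_of_nhds
  rw [zero_smul, add_zero] at hstat
  have hpos := pos_of_mulVec_eq_zero hnn hself hconn hstat (hmass ▸ one_pos)
  have hsum := sum_eq_zero_of_hasDerivAt (hμ.mono fun _ h => h.2) hδ
  have hLδ : CTMCLaplacian ℓ *ᵥ δ = μ 0 ustar • (Pi.single ustar 1 - Pi.single vstar 1) := by
    rw [eq_neg_of_add_eq_zero_left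
        (mulVec_add_mulVec_eq_zero_of_hasDerivAt (hμ.mono fun _ h => h.1) hδ), sub_mulVec,
      single_mulVec_eq, single_mulVec_eq, one_mul, ← smul_sub, ← smul_neg, neg_sub]
  have hδ0 : δ ≠ 0 := by
    rintro rfl
    exact (hpos ustar).ne (by simpa [huv] using congrFun hLδ ustar)
  have hmax : ∀ w, δ w / μ 0 w ≤ δ vstar / μ 0 vstar := by
    refine div_le_div_of_mulVec_nonneg hnn hself hconn hstat hpos fun w hw => ?_
    simpa [hLδ, Pi.single_apply, hw] using ite_nonneg (hpos ustar).le le_rfl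
  have hmin : ∀ w, (-δ) w / μ 0 w ≤ (-δ) ustar / μ 0 ustar := by
    refine div_le_div_of_mulVec_nonneg hnn hself hconn hstat hpos fun w hw => ?_
    simpa [mulVec_neg, hLδ, Pi.single_apply, hw] using ite_nonneg (hpos ustar).le le_rfl
  exact ⟨neg_pos.1 (pos_of_forall_div_le hpos (by simp [hsum]) (neg_ne_zero.2 hδ0) hmin),
    pos_of_forall_div_le hpos hsum hδ0 hmax⟩
end

section
/- Let L be the Laplacian of an irreducible CTMC with strongly connected underlying graph G = (V, E), j* = (u*, v*) ∈ E, and u' ∈ V. Then the response δ_{u'} of the stationary distribution to perturbing j* is never identically zero as a function of the positive transition rates; i.e., there exists an assignment of positive rates for which δ_{u'} ≠ 0. -/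
/-!
Write the perturbation as `Δ = (e_{v*} - e_{u*}) e_{u*}ᵀ`. If `L μ₀ = 0`, `∑ μ₀ = 1`,
`L w = e_{v*} - e_{u*}` and `∑ w = 0`, then `μ₀ - (ε μ₀(u*) / (1 + ε w(u*))) w` is a normalised
kernel vector of `L + εΔ`, so `δ = -μ₀(u*) w`. For irreducible rates a kernel vector that is
positive somewhere is positive everywhere (its positive part is again in the kernel), so `μ₀ > 0`
and it suffices to choose the rates so that `w` vanishes nowhere.

Let `R` be the set of vertices reachable from `v*` without entering `u*`, and take `w < 0` on `R`,
`w > 0` off `R`, `∑ w = 0`. Once the edges leaving `R` are reversed, `u*` reaches every vertex and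
every vertex reaches `v*`; summing the unit flows along such walks, one through each edge, gives a
flow `F` from `u*` to `v*` whose value on every edge of `E` is nonzero with the sign of `w` at the
tail. The rates `ℓ(u, v) = F(u, v) / w(u)` are then positive exactly on `E`, and `L w` is the net
inflow of `F`, namely `e_{v*} - e_{u*}`.
-/

/-- The Laplacian of transition rates `ℓ` (`ℓ u v` = rate from `u` to `v`). -/
noncomputable def RateLaplacian {V : Type*} [Fintype V] [DecidableEq V] (ℓ : V → V → ℝ) :
    Matrix V V ℝ :=
  fun v u => if v = u then -∑ w ∈ Finset.univ.filter (· ≠ u), ℓ u w else ℓ u v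

section

open Matrix Finset

variable {V : Type*}

section Reachability

variable {E : Set (V × V)} {s t : V}

def reverseOutOf (E : Set (V × V)) (R : Set V) (x y : V) : Prop :=
  ((x, y) ∈ E ∧ x ∉ R) ∨ ((y, x) ∈ E ∧ y ∈ R)

def avoidReach (E : Set (V × V)) (s t : V) : Set V :=
  {x | Relation.ReflTransGen (fun a b => (a, b) ∈ E ∧ b ≠ s) t x}

theorem not_mem_avoidReach (hst : s ≠ t) : s ∉ avoidReach E s t := by
  intro h
  cases h with
  | refl => exact hst rfl
  | tail _ hb => exact hb.2 rfl

theorem reflTransGen_reverseOutOf_avoidReach_to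
    (hconn : ∀ u v, Relation.ReflTransGen (fun a b => (a, b) ∈ E) u v) (a : V) :
    Relation.ReflTransGen (reverseOutOf E (avoidReach E s t)) a t := by
  have hR : ∀ x ∈ avoidReach E s t,
      Relation.ReflTransGen (reverseOutOf E (avoidReach E s t)) x t := by
    intro x hx
    induction hx with
    | refl => rfl
    | @tail y z hy hyz ih => exact .head (Or.inr ⟨hyz.1, hy⟩) ih
  induction hconn a t using Relation.ReflTransGen.head_induction_on with
  | refl => rfl
  | @head x y hxy _ ih =>
    by_cases hx : x ∈ avoidReach E s t
    · exact hR x hx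
    · exact .head (Or.inl ⟨hxy, hx⟩) ih

theorem reflTransGen_reverseOutOf_avoidReach_from
    (hconn : ∀ u v, Relation.ReflTransGen (fun a b => (a, b) ∈ E) u v) (hst : s ≠ t) (a : V) :
    Relation.ReflTransGen (reverseOutOf E (avoidReach E s t)) s a := by
  have hR : ∀ x ∈ avoidReach E s t,
      Relation.ReflTransGen (reverseOutOf E (avoidReach E s t)) s x := by
    intro x hx
    induction hconn x s using Relation.ReflTransGen.head_induction_on with
    | refl => exact absurd hx (not_mem_avoidReach hst)
    | @head x y hxy _ ih =>
      by_cases hy : y = s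
      · subst hy
        exact .single (Or.inr ⟨hxy, hx⟩)
      · exact (ih (.tail hx ⟨hxy, hy⟩)).tail (Or.inr ⟨hxy, hx⟩)
  induction hconn s a with
  | refl => rfl
  | @tail y z _ hyz ih =>
    by_cases hz : z ∈ avoidReach E s t
    · exact hR z hz
    · by_cases hy : y ∈ avoidReach E s t
      · by_cases hzs : z = s
        · exact hzs ▸ .refl
        · exact absurd (.tail hy ⟨hyz, hzs⟩) hz
      · exact ih.tail (Or.inl ⟨hyz, hy⟩)

end Reachability

def IsSignedFlow (E : Set (V × V)) (w : V → ℝ) (F : Matrix V V ℝ) : Prop :=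
  (∀ u v, (u, v) ∉ E → F u v = 0) ∧ ∀ u v, 0 ≤ F u v * w u

namespace IsSignedFlow

variable {E : Set (V × V)} {w : V → ℝ}

theorem zero : IsSignedFlow E w 0 :=
  ⟨fun _ _ _ => rfl, fun _ _ => by simp⟩

theorem add {F G : Matrix V V ℝ} (hF : IsSignedFlow E w F) (hG : IsSignedFlow E w G) :
    IsSignedFlow E w (F + G) :=
  ⟨fun u v h => by simp [hF.1 u v h, hG.1 u v h],
    fun u v => by simpa [add_mul] using add_nonneg (hF.2 u v) (hG.2 u v)⟩

theorem sum {ι : Type*} (s : Finset ι) {F : ι → Matrix V V ℝ}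
    (hF : ∀ i ∈ s, IsSignedFlow E w (F i)) : IsSignedFlow E w (∑ i ∈ s, F i) := by
  induction s using Finset.cons_induction with
  | empty => exact zero
  | cons i s _ ih =>
    rw [sum_cons]
    exact (hF i (mem_cons_self i s)).add (ih fun j hj => hF j (mem_cons_of_mem hj))

theorem smul {F : Matrix V V ℝ} (hF : IsSignedFlow E w F) {c : ℝ} (hc : 0 ≤ c) :
    IsSignedFlow E w (c • F) :=
  ⟨fun u v h => by simp [hF.1 u v h],
    fun u v => by simpa [mul_assoc] using mul_nonneg hc (hF.2 u v)⟩

theorem single [DecidableEq V] {a b : V} (hab : (a, b) ∈ E) {c : ℝ} (hc : 0 ≤ c * w a) :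
    IsSignedFlow E w (Matrix.single a b c) := by
  refine ⟨fun u v h => ?_, fun u v => ?_⟩ <;> rw [single_apply] <;> split_ifs with h'
  · exact absurd (h'.1 ▸ h'.2 ▸ hab) h
  · rfl
  · rwa [← h'.1]
  · simp

end IsSignedFlow

theorem single_sub_single_eq_vecMulVec [DecidableEq V] (a b : V) :
    Matrix.single b a (1 : ℝ) - Matrix.single a a 1 =
      vecMulVec (Pi.single b 1 - Pi.single a 1) (Pi.single a 1) := by
  ext i j
  by_cases hj : a = j <;> simp [single_apply, vecMulVec_apply, Pi.single_apply, hj, eq_comm]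

variable [Fintype V]

def netInflow : Matrix V V ℝ →ₗ[ℝ] V → ℝ where
  toFun F v := ∑ u, F u v - ∑ z, F v z
  map_add' F G := by
    ext v
    simp only [Matrix.add_apply, sum_add_distrib, Pi.add_apply]
    ring
  map_smul' c F := by
    ext v
    simp only [Matrix.smul_apply, smul_eq_mul, ← mul_sum, RingHom.id_apply, Pi.smul_apply]
    ring

theorem netInflow_apply (F : Matrix V V ℝ) (v : V) :
    netInflow F v = ∑ u, F u v - ∑ z, F v z := rfl

theorem sum_netInflow (F : Matrix V V ℝ) : ∑ v, netInflow F v = 0 := by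
  simp only [netInflow_apply, sum_sub_distrib]
  rw [sum_comm, sub_self]

theorem exists_sum_eq_zero_neg_on_pos_off {R : Set V} {a b : V} (ha : a ∈ R) (hb : b ∉ R) :
    ∃ w : V → ℝ, ∑ v, w v = 0 ∧ (∀ v ∈ R, w v < 0) ∧ ∀ v ∉ R, 0 < w v := by
  classical
  set m := ((#(univ.filter (· ∈ R)) : ℕ) : ℝ)
  set k := ((#(univ.filter (· ∉ R)) : ℕ) : ℝ)
  have hm : 0 < m := Nat.cast_pos.2 (card_pos.2 ⟨a, mem_filter.2 ⟨mem_univ a, ha⟩⟩)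
  have hk : 0 < k := Nat.cast_pos.2 (card_pos.2 ⟨b, mem_filter.2 ⟨mem_univ b, hb⟩⟩)
  refine ⟨fun v => if v ∈ R then -k else m, ?_, fun v hv => by simpa [hv],
    fun v hv => by simpa [hv]⟩
  rw [sum_ite, sum_const, sum_const, nsmul_eq_mul, nsmul_eq_mul]
  ring

variable [DecidableEq V]

theorem netInflow_single (a b : V) (c : ℝ) :
    netInflow (single a b c) = c • (Pi.single b 1 - Pi.single a 1) := by
  ext v
  simp only [netInflow_apply, single_apply, ite_and, sum_ite_eq, mem_univ, if_true,
    Pi.smul_apply, Pi.sub_apply, Pi.single_apply, smul_eq_mul]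
  obtain rfl | ha := eq_or_ne v a <;> obtain rfl | hb := eq_or_ne v b <;> simp [*, Ne.symm]

theorem RateLaplacian_apply (ℓ : V → V → ℝ) (v u : V) :
    RateLaplacian ℓ v u = ℓ u v - if v = u then ∑ z, ℓ u z else 0 := by
  unfold RateLaplacian
  split_ifs with h
  · rw [filter_ne', ← add_sum_erase _ _ (mem_univ u), h]
    ring
  · ring

theorem RateLaplacian_mulVec (ℓ : V → V → ℝ) (x : V → ℝ) :
    RateLaplacian ℓ *ᵥ x = netInflow (of fun u v => ℓ u v * x u) := by
  ext v
  simp only [mulVec, dotProduct, RateLaplacian_apply, sub_mul, sum_sub_distrib, ite_mul,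
    zero_mul, sum_ite_eq, mem_univ, if_true, netInflow_apply, of_apply, sum_mul]

theorem RateLaplacian_mulVec_apply (ℓ : V → V → ℝ) (x : V → ℝ) (v : V) :
    (RateLaplacian ℓ *ᵥ x) v = ∑ u, ℓ u v * x u - (∑ z, ℓ v z) * x v := by
  rw [RateLaplacian_mulVec, netInflow_apply]
  simp only [of_apply, sum_mul]

theorem RateLaplacian_mulVec_eq_zero_iff {ℓ : V → V → ℝ} {x : V → ℝ} :
    RateLaplacian ℓ *ᵥ x = 0 ↔ ∀ v, ∑ u, ℓ u v * x u = (∑ z, ℓ v z) * x v := by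
  simp only [funext_iff, RateLaplacian_mulVec_apply, Pi.zero_apply, sub_eq_zero]

theorem sum_RateLaplacian_mulVec (ℓ : V → V → ℝ) (x : V → ℝ) :
    ∑ v, (RateLaplacian ℓ *ᵥ x) v = 0 := by
  rw [RateLaplacian_mulVec, sum_netInflow]

theorem RateLaplacian_div_mulVec (F : Matrix V V ℝ) {w : V → ℝ} (hw : ∀ v, w v ≠ 0) :
    RateLaplacian (fun u v => F u v / w u) *ᵥ w = netInflow F := by
  rw [RateLaplacian_mulVec]
  congr
  ext u v
  exact div_mul_cancel₀ _ (hw u)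

section Kernel

variable {ℓ : V → V → ℝ} (hℓ : ∀ u v, 0 ≤ ℓ u v)
include hℓ

theorem RateLaplacian_mulVec_max_zero {x : V → ℝ} (hx : RateLaplacian ℓ *ᵥ x = 0) :
    RateLaplacian ℓ *ᵥ (fun v => max (x v) 0) = 0 := by
  have hnonneg : ∀ v, 0 ≤ (RateLaplacian ℓ *ᵥ fun v => max (x v) 0) v := by
    intro v
    have hbal := RateLaplacian_mulVec_eq_zero_iff.1 hx v
    have hout : 0 ≤ ∑ z, ℓ v z := sum_nonneg fun z _ => hℓ v z
    have hin : max (∑ u, ℓ u v * x u) 0 ≤ ∑ u, ℓ u v * max (x u) 0 :=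
      max_le (sum_le_sum fun u _ => mul_le_mul_of_nonneg_left (le_max_left _ _) (hℓ u v))
        (sum_nonneg fun u _ => mul_nonneg (hℓ u v) (le_max_right _ _))
    rw [RateLaplacian_mulVec_apply, sub_nonneg, mul_max_of_nonneg _ _ hout, mul_zero, ← hbal]
    exact hin
  ext v
  exact (sum_eq_zero_iff_of_nonneg fun v _ => hnonneg v).1
    (sum_RateLaplacian_mulVec ℓ _) v (mem_univ v)

theorem pos_of_RateLaplacian_mulVec_eq_zero_of_nonneg {y : V → ℝ}
    (hy : RateLaplacian ℓ *ᵥ y = 0) (hy0 : ∀ v, 0 ≤ y v) {b c : V} (hbc : 0 < ℓ b c)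
    (hb : 0 < y b) : 0 < y c := by
  have hbal := RateLaplacian_mulVec_eq_zero_iff.1 hy c
  have hin : 0 < ∑ u, ℓ u c * y u :=
    lt_of_lt_of_le (mul_pos hbc hb)
      (single_le_sum (f := fun u => ℓ u c * y u) (fun u _ => mul_nonneg (hℓ u c) (hy0 u))
        (mem_univ b))
  rw [hbal] at hin
  exact (hy0 c).lt_of_ne fun h => by simp [← h] at hin

variable (hirr : ∀ u v, Relation.ReflTransGen (fun a b => 0 < ℓ a b) u v)
include hirr

theorem pos_of_RateLaplacian_mulVec_eq_zero {x : V → ℝ} (hx : RateLaplacian ℓ *ᵥ x = 0)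
    {v₀ : V} (h₀ : 0 < x v₀) (v : V) : 0 < x v := by
  have hpos : 0 < max (x v) 0 := by
    induction hirr v₀ v with
    | refl => exact lt_max_of_lt_left h₀
    | tail _ hbc ih =>
      exact pos_of_RateLaplacian_mulVec_eq_zero_of_nonneg hℓ
        (RateLaplacian_mulVec_max_zero hℓ hx) (fun _ => le_max_right _ _) hbc ih
  simpa using hpos

theorem eq_zero_of_RateLaplacian_mulVec_eq_zero {x : V → ℝ} (hx : RateLaplacian ℓ *ᵥ x = 0)
    (hsum : ∑ v, x v = 0) : x = 0 := by
  have hnonpos : ∀ x : V → ℝ, RateLaplacian ℓ *ᵥ x = 0 → ∑ v, x v = 0 → ∀ v, x v ≤ 0 := by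
    intro x hx hsum v
    by_contra! hv
    have := sum_pos (fun u _ => pos_of_RateLaplacian_mulVec_eq_zero hℓ hirr hx hv u)
      ⟨v, mem_univ v⟩
    linarith
  have hneg := hnonpos (-x) (by rw [mulVec_neg, hx, neg_zero]) (by simp [hsum])
  ext v
  exact le_antisymm (hnonpos x hx hsum v) (by simpa using hneg v)

theorem exists_pos_RateLaplacian_mulVec_eq_zero [Nonempty V] :
    ∃ μ : V → ℝ, RateLaplacian ℓ *ᵥ μ = 0 ∧ ∑ v, μ v = 1 ∧ ∀ v, 0 < μ v := by
  have hcol : (fun _ => 1 : V → ℝ) ᵥ* RateLaplacian ℓ = 0 := by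
    ext u
    rw [Pi.zero_apply, ← sum_RateLaplacian_mulVec ℓ (Pi.single u 1), mulVec_single_one]
    simp [vecMul, dotProduct]
  obtain ⟨x, hx0, hx⟩ := exists_mulVec_eq_zero_iff.2
    (exists_vecMul_eq_zero_iff.1 ⟨_, one_ne_zero, hcol⟩)
  have hsum : ∑ v, x v ≠ 0 := fun h =>
    hx0 (eq_zero_of_RateLaplacian_mulVec_eq_zero hℓ hirr hx h)
  set μ := (∑ v, x v)⁻¹ • x
  have hμ : RateLaplacian ℓ *ᵥ μ = 0 := by rw [mulVec_smul, hx, smul_zero]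
  have hμsum : ∑ v, μ v = 1 := by simp [μ, ← mul_sum, hsum]
  obtain ⟨v₀, -, hv₀⟩ := exists_lt_of_sum_lt (s := univ) (f := 0) (g := μ) (by simp [hμsum])
  exact ⟨μ, hμ, hμsum, pos_of_RateLaplacian_mulVec_eq_zero hℓ hirr hμ hv₀⟩

end Kernel

section Flows

variable {E : Set (V × V)} {R : Set V} {w : V → ℝ}

theorem exists_single_of_reverseOutOf (hwR : ∀ v ∈ R, w v < 0) (hwRc : ∀ v ∉ R, 0 < w v)
    {x y : V} (h : reverseOutOf E R x y) :
    ∃ a b c, (a, b) ∈ E ∧ 0 < c * w a ∧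
      netInflow (Matrix.single a b c) = Pi.single y 1 - Pi.single x 1 := by
  rcases h with ⟨hxy, hx⟩ | ⟨hyx, hy⟩
  · exact ⟨x, y, 1, hxy, by simpa using hwRc x hx, by simp [netInflow_single]⟩
  · exact ⟨y, x, -1, hyx, by simpa using hwR y hy, by simp [netInflow_single]⟩

theorem exists_signedFlow_of_reflTransGen (hwR : ∀ v ∈ R, w v < 0)
    (hwRc : ∀ v ∉ R, 0 < w v) {x y : V} (h : Relation.ReflTransGen (reverseOutOf E R) x y) :
    ∃ F, IsSignedFlow E w F ∧ netInflow F = Pi.single y 1 - Pi.single x 1 := by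
  induction h with
  | refl => exact ⟨0, IsSignedFlow.zero, by simp⟩
  | @tail y z _ hyz ih =>
    obtain ⟨F, hF, hFx⟩ := ih
    obtain ⟨a, b, c, hab, hc, hG⟩ := exists_single_of_reverseOutOf hwR hwRc hyz
    refine ⟨F + Matrix.single a b c, hF.add (IsSignedFlow.single hab hc.le), ?_⟩
    rw [map_add, hFx, hG]
    abel

variable {s t : V} (hwR : ∀ v ∈ R, w v < 0) (hwRc : ∀ v ∉ R, 0 < w v)
  (hs : ∀ v, Relation.ReflTransGen (reverseOutOf E R) s v)
  (ht : ∀ v, Relation.ReflTransGen (reverseOutOf E R) v t)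
include hwR hwRc hs ht

theorem exists_signedFlow_pos_at {a b : V} (hab : (a, b) ∈ E) :
    ∃ F, IsSignedFlow E w F ∧ netInflow F = Pi.single t 1 - Pi.single s 1 ∧
      0 < F a b * w a := by
  obtain ⟨p, q, c, hc, hpq⟩ : ∃ p q c, 0 < c * w a ∧
      netInflow (Matrix.single a b c) = Pi.single q 1 - Pi.single p 1 := by
    by_cases ha : a ∈ R
    · exact ⟨b, a, -1, by simpa using hwR a ha, by simp [netInflow_single]⟩
    · exact ⟨a, b, 1, by simpa using hwRc a ha, by simp [netInflow_single]⟩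
  obtain ⟨F₁, hF₁, hF₁s⟩ := exists_signedFlow_of_reflTransGen hwR hwRc (hs p)
  obtain ⟨F₂, hF₂, hF₂t⟩ := exists_signedFlow_of_reflTransGen hwR hwRc (ht q)
  refine ⟨F₁ + Matrix.single a b c + F₂, (hF₁.add (IsSignedFlow.single hab hc.le)).add hF₂,
    ?_, ?_⟩
  · rw [map_add, map_add, hF₁s, hpq, hF₂t]
    abel
  · have h₁ := hF₁.2 a b
    have h₂ := hF₂.2 a b
    simp only [Matrix.add_apply, single_apply_same, add_mul]
    linarith

theorem exists_signedFlow :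
    ∃ F : Matrix V V ℝ, (∀ u v, (u, v) ∉ E → F u v = 0) ∧
      (∀ u v, (u, v) ∈ E → 0 < F u v * w u) ∧
      netInflow F = Pi.single t 1 - Pi.single s 1 := by
  have hedge : ∀ e : V × V, ∃ F, IsSignedFlow E w F ∧
      netInflow F = Pi.single t 1 - Pi.single s 1 ∧ (e ∈ E → 0 < F e.1 e.2 * w e.1) := by
    rintro ⟨a, b⟩
    by_cases hab : (a, b) ∈ E
    · obtain ⟨F, hF, hFst, hFab⟩ := exists_signedFlow_pos_at hwR hwRc hs ht hab
      exact ⟨F, hF, hFst, fun _ => hFab⟩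
    · obtain ⟨F, hF, hFst⟩ := exists_signedFlow_of_reflTransGen hwR hwRc (hs t)
      exact ⟨F, hF, hFst, fun h => absurd h hab⟩
  choose F hF hFst hFpos using hedge
  have hN : (0 : ℝ) < Fintype.card (V × V) := by
    have : Nonempty (V × V) := ⟨(s, s)⟩
    exact_mod_cast Fintype.card_pos
  have hsum := IsSignedFlow.sum univ fun e _ => hF e
  refine ⟨(Fintype.card (V × V) : ℝ)⁻¹ • ∑ e, F e, (hsum.smul (inv_nonneg.2 hN.le)).1,
    fun u v huv => ?_, ?_⟩
  · have hle : F (u, v) u v * w u ≤ (∑ e, F e) u v * w u := by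
      simp only [Matrix.sum_apply, sum_mul]
      exact single_le_sum (f := fun e => F e u v * w u) (fun e _ => (hF e).2 u v) (mem_univ _)
    have := mul_pos (inv_pos.2 hN) ((hFpos (u, v) huv).trans_le hle)
    simpa [mul_assoc] using this
  · rw [map_smul, map_sum, sum_congr rfl fun e _ => hFst e, sum_const, card_univ,
      ← Nat.cast_smul_eq_nsmul ℝ, smul_smul, inv_mul_cancel₀ hN.ne', one_smul]

end Flows

theorem exists_rates_RateLaplacian_mulVec_eq {E : Set (V × V)}
    (hconn : ∀ u v, Relation.ReflTransGen (fun a b => (a, b) ∈ E) u v) {s t : V} (hst : s ≠ t) :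
    ∃ ℓ : V → V → ℝ, ∃ w : V → ℝ,
      (∀ u v, ((u, v) ∈ E → 0 < ℓ u v) ∧ ((u, v) ∉ E → ℓ u v = 0)) ∧
      RateLaplacian ℓ *ᵥ w = Pi.single t 1 - Pi.single s 1 ∧ ∑ v, w v = 0 ∧ ∀ v, w v ≠ 0 := by
  obtain ⟨w, hw_sum, hwR, hwRc⟩ :=
    exists_sum_eq_zero_neg_on_pos_off (R := avoidReach E s t) .refl (not_mem_avoidReach hst)
  have hw : ∀ v, w v ≠ 0 := fun v => by
    by_cases hv : v ∈ avoidReach E s t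
    exacts [(hwR v hv).ne, (hwRc v hv).ne']
  obtain ⟨F, hF0, hFpos, hF⟩ := exists_signedFlow hwR hwRc
    (reflTransGen_reverseOutOf_avoidReach_from hconn hst)
    (reflTransGen_reverseOutOf_avoidReach_to hconn)
  refine ⟨fun u v => F u v / w u, w, fun u v => ⟨fun huv => ?_, fun huv => ?_⟩,
    by rw [RateLaplacian_div_mulVec F hw, hF], hw_sum, hw⟩
  · exact div_pos_iff.2 (mul_pos_iff.1 (hFpos u v huv))
  · simp [hF0 u v huv]

end

open Filter Topology Matrix in
theorem exists_hasDerivAt_kernel_add_smul_vecMulVec {n : Type*} [Fintype n]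
    (L : Matrix n n ℝ) {μ₀ w d a : n → ℝ} (hμ₀ : L *ᵥ μ₀ = 0) (hw : L *ᵥ w = d)
    (hμ₀_sum : ∑ i, μ₀ i = 1) (hw_sum : ∑ i, w i = 0) :
    ∃ μ : ℝ → n → ℝ,
      (∀ᶠ ε in 𝓝 0, (L + ε • vecMulVec d a) *ᵥ μ ε = 0 ∧ ∑ i, μ ε i = 1) ∧
      HasDerivAt μ (-((a ⬝ᵥ μ₀) • w)) 0 := by
  set t : ℝ → ℝ := fun ε => ε * (a ⬝ᵥ μ₀) / (1 + ε * (a ⬝ᵥ w))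
  have hden : ∀ᶠ ε in 𝓝 (0 : ℝ), 1 + ε * (a ⬝ᵥ w) ≠ 0 :=
    (continuous_const.add (continuous_id.mul continuous_const)).continuousAt.eventually_ne
      (by simp)
  have ht : HasDerivAt t (a ⬝ᵥ μ₀) 0 := by
    have := ((hasDerivAt_id' (0 : ℝ)).mul_const (a ⬝ᵥ μ₀)).fun_div
      (((hasDerivAt_id' (0 : ℝ)).mul_const (a ⬝ᵥ w)).const_add 1) (by simp)
    simpa using this
  refine ⟨fun ε => μ₀ - t ε • w, hden.mono fun ε hε => ⟨?_, ?_⟩,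
    (ht.smul_const w).const_sub μ₀⟩
  · have hbal : ε * (a ⬝ᵥ μ₀) - t ε * (1 + ε * (a ⬝ᵥ w)) = 0 := by
      simp only [t]
      field_simp
      ring
    dsimp only
    rw [add_mulVec, smul_mulVec, vecMulVec_mulVec, op_smul_eq_smul, mulVec_sub, mulVec_smul,
      hμ₀, hw, dotProduct_sub, dotProduct_smul, smul_eq_mul]
    calc _ = (ε * (a ⬝ᵥ μ₀) - t ε * (1 + ε * (a ⬝ᵥ w))) • d := by module
      _ = 0 := by rw [hbal, zero_smul]
  · simp [Finset.sum_sub_distrib, ← Finset.mul_sum, hμ₀_sum, hw_sum]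

/-- For a fixed strongly connected graph `E` (no self-loops), edge
`j* = (u*, v*) ∈ E` and vertex `u'`, the response `δ_{u'}` is not identically
zero as a function of the rates: there is an assignment of positive transition
rates (positive exactly on `E`) for which the response of the stationary
distribution at `u'` to perturbing `j*` is nonzero. -/
theorem stmt10 {V : Type*} [Fintype V] [DecidableEq V] (E : Set (V × V))
    (hself : ∀ v : V, (v, v) ∉ E)
    (hconn : ∀ u v : V, Relation.ReflTransGen (fun a b => (a, b) ∈ E) u v)
    (ustar vstar : V) (hj : (ustar, vstar) ∈ E) (u' : V) :
    ∃ ℓ : V → V → ℝ,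
      (∀ u v : V, ((u, v) ∈ E → 0 < ℓ u v) ∧ ((u, v) ∉ E → ℓ u v = 0)) ∧
      ∃ μ : ℝ → V → ℝ, ∃ δ : V → ℝ,
        (∀ᶠ ε in nhds (0 : ℝ),
          (RateLaplacian ℓ + ε • (Matrix.single vstar ustar (1 : ℝ) -
              Matrix.single ustar ustar (1 : ℝ))).mulVec (μ ε) = 0 ∧
          ∑ v : V, μ ε v = 1) ∧
        HasDerivAt μ δ 0 ∧ δ u' ≠ 0 := by
  have hne : ustar ≠ vstar := fun h => hself ustar (h ▸ hj)
  obtain ⟨ℓ, w, hℓ, hw, hw_sum, hw_ne⟩ := exists_rates_RateLaplacian_mulVec_eq hconn hne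
  have hℓ_nonneg : ∀ u v, 0 ≤ ℓ u v := fun u v => by
    by_cases huv : (u, v) ∈ E
    exacts [((hℓ u v).1 huv).le, ((hℓ u v).2 huv).ge]
  have hirr : ∀ u v, Relation.ReflTransGen (fun a b => 0 < ℓ a b) u v :=
    fun u v => Relation.ReflTransGen.mono (fun a b hab => (hℓ a b).1 hab) _ _ (hconn u v)
  have : Nonempty V := ⟨ustar⟩
  obtain ⟨μ₀, hμ₀, hμ₀_sum, hμ₀_pos⟩ := exists_pos_RateLaplacian_mulVec_eq_zero hℓ_nonneg hirr
  obtain ⟨μ, hμ, hδ⟩ := exists_hasDerivAt_kernel_add_smul_vecMulVec _ hμ₀ hw hμ₀_sum hw_sum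
    (a := Pi.single ustar 1)
  refine ⟨ℓ, hℓ, μ, _, by simpa only [single_sub_single_eq_vecMulVec] using hμ, hδ, ?_⟩
  simpa [single_one_dotProduct] using mul_ne_zero (hμ₀_pos ustar).ne' (hw_ne u')
end

section
/- Let G = (V, E) be a finite strongly connected directed graph, j* = (u*, v*) ∈ E, and u' ∈ V. There exists a vertex w ∈ V and a j*-divided tree pair (T_{u'}, T_w) with u* ∈ T_{u'} if and only if there exists a directed path in G from u* to u' that does not contain v*. -/
/-! If `(T_{u'}, T_w)` is `j*`-divided with `u*` in the first tree, then `v*` lies in the second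
one, so the tree path from `u*` to `u'` avoids `v*`. Conversely, let `S` be the set of vertices
that reach `u'` avoiding `v*`. It is closed under predecessors other than `v*`, so a walk from
outside `S` to `v*`, which exists by strong connectivity, never enters `S`. Hence `S` and its
complement are spanned by in-trees rooted at `u'` and `v*`: let every vertex point to a
neighbour one step closer to the root. -/

/-- `T` is a subgraph of the directed graph with edge set `E` that is a tree with
vertex set `S`, rooted at `r` (possibly the single vertex `r`). -/
def IsRootedTreeOn {V : Type*} (E T : Set (V × V)) (S : Set V) (r : V) : Prop :=
  r ∈ S ∧ T ⊆ E ∧ (∀ e ∈ T, e.1 ∈ S ∧ e.2 ∈ S) ∧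
  (∀ u ∈ S, u ≠ r → ∃! e, e ∈ T ∧ e.1 = u) ∧
  (∀ e ∈ T, e.1 ≠ r) ∧
  (∀ u ∈ S, Relation.ReflTransGen (fun a b => (a, b) ∈ T) u r)

/-- `(T1, T2)`, with vertex sets `S1, S2` and roots `r1, r2`, is a `j`-divided
tree pair: two vertex-disjoint rooted trees whose vertex sets partition `V`,
such that the edge `j` joins the two trees (equivalently, their union together
with `j` is weakly connected). -/
def IsJDividedTreePair {V : Type*} (E T1 : Set (V × V)) (S1 : Set V) (r1 : V)
    (T2 : Set (V × V)) (S2 : Set V) (r2 : V) (j : V × V) : Prop :=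
  IsRootedTreeOn E T1 S1 r1 ∧ IsRootedTreeOn E T2 S2 r2 ∧
  Disjoint S1 S2 ∧ S1 ∪ S2 = Set.univ ∧
  ((j.1 ∈ S1 ∧ j.2 ∈ S2) ∨ (j.1 ∈ S2 ∧ j.2 ∈ S1))

open Relation

section

variable {V : Type*}

def InducedAdj (E : Set (V × V)) (S : Set V) (a b : V) : Prop :=
  (a, b) ∈ E ∧ a ∈ S ∧ b ∈ S

section InducedAdj

variable {E : Set (V × V)} {S : Set V}

lemma mem_iff_of_reflTransGen_inducedAdj {a b : V} (h : ReflTransGen (InducedAdj E S) a b) :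
    a ∈ S ↔ b ∈ S := by
  induction h with
  | refl => rfl
  | tail _ hbc ih => exact ih.trans (iff_of_true hbc.2.1 hbc.2.2)

lemma exists_isChain_forall_mem_iff_reflTransGen {a b : V} :
    (∃ l : List V, l.IsChain (fun x y => (x, y) ∈ E) ∧ l.head? = some a ∧
        l.getLast? = some b ∧ ∀ x ∈ l, x ∈ S) ↔
      a ∈ S ∧ ReflTransGen (InducedAdj E S) a b := by
  constructor
  · rintro ⟨_ | ⟨x, l⟩, hchain, hhead, hlast, hmem⟩
    · simp at hhead
    obtain rfl : x = a := by simpa using hhead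
    refine ⟨hmem x List.mem_cons_self, List.relationReflTransGen_of_exists_isChain_cons l ?_ ?_⟩
    · exact hchain.imp_of_mem_imp fun x y hx hy h => ⟨h, hmem x hx, hmem y hy⟩
    · simpa [List.getLast?_eq_some_getLast] using hlast
  · rintro ⟨ha, h⟩
    obtain ⟨l, hchain, hlast⟩ := List.exists_isChain_cons_of_relationReflTransGen h
    refine ⟨a :: l, hchain.imp fun _ _ h => h.1, rfl, ?_, ?_⟩
    · simp [List.getLast?_eq_some_getLast, hlast]
    · exact hchain.induction _ _ (fun _ _ h _ => h.2.2) fun _ => ha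

lemma reflTransGen_inducedAdj_reachers {u r : V} (h : ReflTransGen (InducedAdj E S) u r) :
    ReflTransGen (InducedAdj E {v | ReflTransGen (InducedAdj E S) v r}) u r := by
  induction h using ReflTransGen.head_induction_on with
  | refl => exact .refl
  | head hac hcr ih => exact .head ⟨hac.1, .head hac hcr, hcr⟩ ih

lemma reflTransGen_inducedAdj_compl {t u : V}
    (hS : ∀ a b, (a, b) ∈ E → a ≠ t → b ∈ S → a ∈ S) (hu : u ∉ S)
    (h : ReflTransGen (fun a b => (a, b) ∈ E) u t) : ReflTransGen (InducedAdj E Sᶜ) u t := by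
  induction h using ReflTransGen.head_induction_on with
  | refl => exact .refl
  | @head a c hac _ ih =>
    by_cases hat : a = t
    · exact hat ▸ .refl
    · have hc : c ∉ S := fun hc => hu (hS a c hac hat hc)
      exact .head ⟨hac, hu, hc⟩ (ih hc)

end InducedAdj

def ReachesIn (R : V → V → Prop) (r : V) : ℕ → V → Prop
  | 0, u => u = r
  | n + 1, u => ∃ v, R u v ∧ ReachesIn R r n v

lemma exists_reachesIn_of_reflTransGen {R : V → V → Prop} {u r : V}
    (h : ReflTransGen R u r) : ∃ n, ReachesIn R r n u := by
  induction h using ReflTransGen.head_induction_on with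
  | refl => exact ⟨0, rfl⟩
  | head huv _ ih =>
    obtain ⟨n, hn⟩ := ih
    exact ⟨n + 1, _, huv, hn⟩

section RootedTree

variable {E : Set (V × V)} {S : Set V} {r : V}

lemma isRootedTreeOn_of_rank_lt (f : V → V) (rank : V → ℕ) (hr : r ∈ S)
    (hf : ∀ u ∈ S, u ≠ r → InducedAdj E S u (f u) ∧ rank (f u) < rank u) :
    IsRootedTreeOn E ((fun u => (u, f u)) '' {u | u ∈ S ∧ u ≠ r}) S r := by
  refine ⟨hr, ?_, ?_, ?_, ?_, ?_⟩
  · rintro _ ⟨a, ⟨ha, har⟩, rfl⟩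
    exact (hf a ha har).1.1
  · rintro _ ⟨a, ⟨ha, har⟩, rfl⟩
    exact ⟨ha, (hf a ha har).1.2.2⟩
  · intro u hu hur
    refine ⟨(u, f u), ⟨⟨u, ⟨hu, hur⟩, rfl⟩, rfl⟩, ?_⟩
    rintro _ ⟨⟨a, -, rfl⟩, rfl⟩
    rfl
  · rintro _ ⟨a, ⟨-, har⟩, rfl⟩
    exact har
  · intro u hu
    induction u using (measure rank).wf.induction with
    | _ u ih =>
      by_cases hur : u = r
      · exact hur ▸ .refl
      · obtain ⟨hadj, hlt⟩ := hf u hu hur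
        exact .head ⟨u, ⟨hu, hur⟩, rfl⟩ (ih (f u) hlt hadj.2.2)

lemma exists_isRootedTreeOn (hr : r ∈ S)
    (hreach : ∀ u ∈ S, ReflTransGen (InducedAdj E S) u r) : ∃ T, IsRootedTreeOn E T S r := by
  classical
  have hdepth : ∀ u ∈ S, ∃ n, ReachesIn (InducedAdj E S) r n u ∧
      ∀ m, ReachesIn (InducedAdj E S) r m u → n ≤ m := fun u hu =>
    let h := exists_reachesIn_of_reflTransGen (hreach u hu)
    ⟨Nat.find h, Nat.find_spec h, fun _ hm => Nat.find_min' h hm⟩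
  choose! depth hdepth hdepth_min using hdepth
  have hstep : ∀ u ∈ S, u ≠ r → ∃ v, InducedAdj E S u v ∧ depth v < depth u := by
    intro u hu hur
    have hu_depth := hdepth u hu
    rcases hn : depth u with _ | n
    · rw [hn] at hu_depth
      exact absurd hu_depth hur
    · rw [hn] at hu_depth
      obtain ⟨v, huv, hv⟩ := hu_depth
      exact ⟨v, huv, Nat.lt_succ_of_le (hdepth_min v huv.2.2 n hv)⟩
  choose! f hf using hstep
  exact ⟨_, isRootedTreeOn_of_rank_lt f depth hr hf⟩

lemma IsRootedTreeOn.reflTransGen_inducedAdj {T : Set (V × V)} (hT : IsRootedTreeOn E T S r)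
    {u : V} (hu : u ∈ S) : ReflTransGen (InducedAdj E S) u r :=
  ReflTransGen.mono (fun _ _ h => ⟨hT.2.1 h, hT.2.2.1 _ h⟩) _ _ (hT.2.2.2.2.2 u hu)

end RootedTree

lemma exists_isJDividedTreePair_compl {E : Set (V × V)} {S : Set V} {r₁ r₂ : V} {j : V × V}
    (hr₁ : r₁ ∈ S) (hr₂ : r₂ ∉ S) (h₁ : ∀ u ∈ S, ReflTransGen (InducedAdj E S) u r₁)
    (h₂ : ∀ u ∉ S, ReflTransGen (InducedAdj E Sᶜ) u r₂) (hj : j.1 ∈ S ∧ j.2 ∉ S) :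
    ∃ T₁ T₂, IsJDividedTreePair E T₁ S r₁ T₂ Sᶜ r₂ j := by
  obtain ⟨T₁, hT₁⟩ := exists_isRootedTreeOn hr₁ h₁
  obtain ⟨T₂, hT₂⟩ := exists_isRootedTreeOn (S := Sᶜ) hr₂ h₂
  exact ⟨T₁, T₂, hT₁, hT₂, disjoint_compl_right, S.union_compl_self, .inl hj⟩

lemma IsJDividedTreePair.reflTransGen_inducedAdj_compl_singleton {E T₁ T₂ : Set (V × V)}
    {S₁ S₂ : Set V} {r₁ r₂ u v : V} (hpair : IsJDividedTreePair E T₁ S₁ r₁ T₂ S₂ r₂ (u, v))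
    (hu : u ∈ S₁) : u ∈ ({v}ᶜ : Set V) ∧ ReflTransGen (InducedAdj E {v}ᶜ) u r₁ := by
  obtain ⟨hT₁, -, hdisj, -, hcross⟩ := hpair
  have hv : v ∉ S₁ := by
    rcases hcross with ⟨-, hv⟩ | ⟨hu₂, -⟩
    · exact Set.disjoint_right.1 hdisj hv
    · exact absurd hu₂ (Set.disjoint_left.1 hdisj hu)
  have hsub : S₁ ⊆ {v}ᶜ := fun x hx hxv => hv (hxv ▸ hx)
  exact ⟨hsub hu, ReflTransGen.mono (fun _ _ h => ⟨h.1, hsub h.2.1, hsub h.2.2⟩) _ _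
    (hT₁.reflTransGen_inducedAdj hu)⟩

lemma exists_isJDividedTreePair_of_reflTransGen {E : Set (V × V)} {u v r : V}
    (hv : ∀ x, ReflTransGen (fun a b => (a, b) ∈ E) x v) (hu : u ≠ v)
    (h : ReflTransGen (InducedAdj E {v}ᶜ) u r) :
    ∃ (T₁ T₂ : Set (V × V)) (S₁ S₂ : Set V),
      IsJDividedTreePair E T₁ S₁ r T₂ S₂ v (u, v) ∧ u ∈ S₁ := by
  set S : Set V := {x | ReflTransGen (InducedAdj E {v}ᶜ) x r}
  have hr : r ≠ v := (mem_iff_of_reflTransGen_inducedAdj h).1 hu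
  have hS : ∀ x ∈ S, x ≠ v := fun x hx => (mem_iff_of_reflTransGen_inducedAdj hx).2 hr
  have hvS : v ∉ S := fun hvS => hS v hvS rfl
  have hclosed : ∀ a b, (a, b) ∈ E → a ≠ v → b ∈ S → a ∈ S := fun a b hab hav hb =>
    .head ⟨hab, hav, hS b hb⟩ hb
  obtain ⟨T₁, T₂, hpair⟩ := exists_isJDividedTreePair_compl (S := S) (j := (u, v)) .refl hvS
    (fun _ hx => reflTransGen_inducedAdj_reachers hx)
    (fun x hx => reflTransGen_inducedAdj_compl hclosed hx (hv x)) ⟨h, hvS⟩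
  exact ⟨T₁, T₂, S, Sᶜ, hpair, h⟩

end

theorem stmt12_general {V : Type*} (E : Set (V × V))
    (hconn : ∀ u v : V, Relation.ReflTransGen (fun a b => (a, b) ∈ E) u v)
    (ustar vstar u' : V) :
    (∃ (w : V) (T1 T2 : Set (V × V)) (S1 S2 : Set V),
        IsJDividedTreePair E T1 S1 u' T2 S2 w (ustar, vstar) ∧ ustar ∈ S1) ↔
    (∃ l : List V, l.Chain' (fun a b => (a, b) ∈ E) ∧
        l.head? = some ustar ∧ l.getLast? = some u' ∧ vstar ∉ l) := by
  constructor
  · rintro ⟨w, T1, T2, S1, S2, hpair, hu⟩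
    obtain ⟨l, hl, hhead, hlast, hmem⟩ := exists_isChain_forall_mem_iff_reflTransGen.2
      (hpair.reflTransGen_inducedAdj_compl_singleton hu)
    exact ⟨l, hl, hhead, hlast, fun hvl => hmem vstar hvl rfl⟩
  · rintro ⟨l, hl, hhead, hlast, hvl⟩
    obtain ⟨hu, h⟩ := (exists_isChain_forall_mem_iff_reflTransGen (S := {vstar}ᶜ)).1
      ⟨l, hl, hhead, hlast, fun x hx hxv => hvl (hxv ▸ hx)⟩
    exact ⟨vstar, exists_isJDividedTreePair_of_reflTransGen (fun x => hconn x vstar) hu h⟩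

/-- In a strongly connected graph with `j* = (u*, v*) ∈ E`: there is a
`j*`-divided tree pair `(T_{u'}, T_w)` with `u* ∈ T_{u'}` iff there is a directed
path from `u*` to `u'` not containing `v*` (length-zero paths allowed). -/
theorem stmt12 {V : Type*} [Fintype V] (E : Set (V × V))
    (hself : ∀ v : V, (v, v) ∉ E)
    (hconn : ∀ u v : V, Relation.ReflTransGen (fun a b => (a, b) ∈ E) u v)
    (ustar vstar u' : V) (hj : (ustar, vstar) ∈ E) :
    (∃ (w : V) (T1 T2 : Set (V × V)) (S1 S2 : Set V),
        IsJDividedTreePair E T1 S1 u' T2 S2 w (ustar, vstar) ∧ ustar ∈ S1) ↔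
    (∃ l : List V, l.Chain' (fun a b => (a, b) ∈ E) ∧
        l.head? = some ustar ∧ l.getLast? = some u' ∧ vstar ∉ l) :=
  stmt12_general E hconn ustar vstar u'
end

section
/- Let G = (V, E) be a finite strongly connected directed graph and j* = (u*, v*) ∈ E. Then for every u' ∈ V there exists at least one j*-divided tree pair of the form (T_{u'}, T_w) for some w ∈ V, w ≠ u'. -/
namespace Stmt13Aux

variable {V : Type*}

/-- `reachIn R n a b`: there is a walk of length `n` from `a` to `b` along `R`. -/
def reachIn (R : V → V → Prop) : ℕ → V → V → Prop
  | 0, a, b => a = b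
  | (n+1), a, b => ∃ c, R a c ∧ reachIn R n c b

theorem reachIn_snoc {R : V → V → Prop} :
    ∀ {n : ℕ} {a c b : V}, reachIn R n a c → R c b → reachIn R (n+1) a b := by
  intro n
  induction n with
  | zero =>
    intro a c b h h2
    have h' : a = c := h
    exact ⟨b, h' ▸ h2, rfl⟩
  | succ n ih =>
    rintro a c b ⟨d, hd, hrest⟩ h2
    exact ⟨d, hd, ih hrest h2⟩

theorem rtg_reachIn {R : V → V → Prop} {a b : V} (h : Relation.ReflTransGen R a b) :
    ∃ n, reachIn R n a b := by
  induction h with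
  | refl => exact ⟨0, rfl⟩
  | tail _ hcb ih =>
    obtain ⟨n, hn⟩ := ih
    exact ⟨n + 1, reachIn_snoc hn hcb⟩

/-- Split lemma: a walk of length `n` from `x` to `u'` either avoids `z`
(except possibly at the start) or yields a strictly shorter walk from `z` to `u'`. -/
theorem split (E : Set (V × V)) (u' z : V) :
    ∀ n (x : V), reachIn (fun a b => (a, b) ∈ E) n x u' →
      Relation.ReflTransGen (fun a b => (a, b) ∈ E ∧ b ≠ z) x u' ∨
      ∃ m < n, reachIn (fun a b => (a, b) ∈ E) m z u' := by
  intro n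
  induction n with
  | zero =>
    intro x hx
    have h' : x = u' := hx
    subst h'
    exact Or.inl Relation.ReflTransGen.refl
  | succ n ih =>
    rintro x ⟨c, hxc, hrest⟩
    rcases ih c hrest with hl | ⟨m, hm, hr⟩
    · by_cases hcz : c = z
      · subst hcz
        exact Or.inr ⟨n, Nat.lt_succ_self n, hrest⟩
      · exact Or.inl (hl.head ⟨hxc, hcz⟩)
    · exact Or.inr ⟨m, hm.trans (Nat.lt_succ_self n), hr⟩

/-- Existence of an in-arborescence on `S` rooted at `ρ`, given that every
vertex of `S` reaches `ρ` inside `S`. -/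
theorem exists_tree (E : Set (V × V)) (S : Set V) (ρ : V) (hρ : ρ ∈ S)
    (h : ∀ u ∈ S, Relation.ReflTransGen (fun a b => (a, b) ∈ E ∧ a ∈ S ∧ b ∈ S) u ρ) :
    ∃ T, IsRootedTreeOn E T S ρ := by
  classical
  set R : V → V → Prop := fun a b => (a, b) ∈ E ∧ a ∈ S ∧ b ∈ S with hRdef
  have hex : ∀ u, u ∈ S → ∃ n, reachIn R n u ρ := fun u hu => rtg_reachIn (h u hu)
  set d : V → ℕ := fun u => if h' : ∃ n, reachIn R n u ρ then Nat.find h' else 0 with hddef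
  have hstep : ∀ u, u ∈ S → u ≠ ρ → ∃ c, R u c ∧ d c < d u := by
    intro u hu hne
    have h' := hex u hu
    have hfind : reachIn R (Nat.find h') u ρ := Nat.find_spec h'
    have hdu : d u = Nat.find h' := by simp [hddef, dif_pos h']
    cases hn : Nat.find h' with
    | zero =>
      rw [hn] at hfind
      exact absurd hfind hne
    | succ k =>
      rw [hn] at hfind
      obtain ⟨c, hRc, hrest⟩ := hfind
      refine ⟨c, hRc, ?_⟩
      have h'' : ∃ n, reachIn R n c ρ := ⟨k, hrest⟩
      have hdc : d c ≤ k := by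
        have : d c = Nat.find h'' := by simp [hddef, dif_pos h'']
        rw [this]
        exact Nat.find_le hrest
      omega
  choose! next hnextR hnextlt using hstep
  refine ⟨{p : V × V | p.1 ∈ S ∧ p.1 ≠ ρ ∧ p.2 = next p.1}, hρ, ?_, ?_, ?_, ?_, ?_⟩
  · rintro ⟨a, b⟩ ⟨ha, hne, hb⟩
    have hb' : b = next a := hb
    rw [hb']
    exact (hnextR a ha hne).1
  · rintro ⟨a, b⟩ ⟨ha, hne, hb⟩
    have := hnextR a ha hne
    exact ⟨this.2.1, hb ▸ this.2.2⟩
  · intro u hu hne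
    have hmem : (u, next u) ∈ {p : V × V | p.1 ∈ S ∧ p.1 ≠ ρ ∧ p.2 = next p.1} :=
      ⟨hu, hne, rfl⟩
    refine ⟨(u, next u), ⟨hmem, rfl⟩, ?_⟩
    · rintro ⟨a, b⟩ ⟨⟨ha, hane, hb⟩, h1⟩
      have h1' : a = u := h1
      subst h1'
      have hb' : b = next a := hb
      rw [hb']
  · rintro ⟨a, b⟩ ⟨ha, hne, hb⟩
    exact hne
  · have reach : ∀ n u, u ∈ S → d u = n →
        Relation.ReflTransGen
          (fun a b => (a, b) ∈ {p : V × V | p.1 ∈ S ∧ p.1 ≠ ρ ∧ p.2 = next p.1}) u ρ := by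
      intro n
      induction n using Nat.strong_induction_on with
      | _ n ih =>
        intro u hu hd
        by_cases hne : u = ρ
        · subst hne; exact Relation.ReflTransGen.refl
        · have hlt := hnextlt u hu hne
          have hR := hnextR u hu hne
          have hT : (u, next u) ∈ {p : V × V | p.1 ∈ S ∧ p.1 ≠ ρ ∧ p.2 = next p.1} :=
            ⟨hu, hne, rfl⟩
          exact Relation.ReflTransGen.head hT
            (ih (d (next u)) (hd ▸ hlt) (next u) hR.2.2 rfl)
    intro u hu
    exact reach (d u) u hu rfl

end Stmt13Aux

open Stmt13Aux in
/-- In a finite strongly connected graph, for every edge `j* = (u*, v*)` and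
every vertex `u'` there exists at least one `j*`-divided tree pair
`(T_{u'}, T_w)` for some `w ≠ u'`. -/
theorem stmt13 {V : Type*} [Fintype V] (E : Set (V × V))
    (hself : ∀ v : V, (v, v) ∉ E)
    (hconn : ∀ u v : V, Relation.ReflTransGen (fun a b => (a, b) ∈ E) u v)
    (ustar vstar : V) (hj : (ustar, vstar) ∈ E) (u' : V) :
    ∃ (w : V) (T1 T2 : Set (V × V)) (S1 S2 : Set V), w ≠ u' ∧
      IsJDividedTreePair E T1 S1 u' T2 S2 w (ustar, vstar) := by
  classical
  have hne : ustar ≠ vstar := by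
    rintro rfl
    exact hself _ hj
  -- dichotomy: a good choice of (r, o)
  have key : ∃ r o : V, r ≠ u' ∧ o ≠ r ∧
      Relation.ReflTransGen (fun a b => (a, b) ∈ E ∧ b ≠ r) o u' ∧
      ((r = ustar ∧ o = vstar) ∨ (r = vstar ∧ o = ustar)) := by
    have hv : ∃ n, reachIn (fun a b => (a, b) ∈ E) n vstar u' :=
      rtg_reachIn (hconn vstar u')
    rcases split E u' ustar (Nat.find hv) vstar (Nat.find_spec hv) with hB | ⟨m, hm, hmr⟩
    · have hru : ustar ≠ u' := by
        intro h
        rcases hB.cases_tail with heq | ⟨c, _, hc⟩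
        · exact hne (h.trans heq)
        · exact hc.2 h.symm
      exact ⟨ustar, vstar, hru, Ne.symm hne, hB, Or.inl ⟨rfl, rfl⟩⟩
    · rcases split E u' vstar m ustar hmr with hA | ⟨m', hm', hmr'⟩
      · have hru : vstar ≠ u' := by
          intro h
          rcases hA.cases_tail with heq | ⟨c, _, hc⟩
          · exact hne (h.trans heq).symm
          · exact hc.2 h.symm
        exact ⟨vstar, ustar, hru, hne, hA, Or.inr ⟨rfl, rfl⟩⟩
      · exact absurd hmr' (Nat.find_min hv (hm'.trans hm))
  obtain ⟨r, o, hru, hor, hpath, hcase⟩ := key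
  set Q : V → V → Prop := fun a b => (a, b) ∈ E ∧ b ≠ r with hQdef
  set S1 : Set V := {x | x ≠ r ∧ Relation.ReflTransGen Q x u'} with hS1def
  have hu'S1 : u' ∈ S1 := ⟨Ne.symm hru, Relation.ReflTransGen.refl⟩
  -- every vertex of S1 reaches u' inside S1
  have hA : ∀ u ∈ S1, Relation.ReflTransGen
      (fun a b => (a, b) ∈ E ∧ a ∈ S1 ∧ b ∈ S1) u u' := by
    have main : ∀ u, Relation.ReflTransGen Q u u' → u ≠ r →
        Relation.ReflTransGen (fun a b => (a, b) ∈ E ∧ a ∈ S1 ∧ b ∈ S1) u u' := by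
      intro u hQ
      induction hQ using Relation.ReflTransGen.head_induction_on with
      | refl => intro _; exact Relation.ReflTransGen.refl
      | head h' hrest ih =>
        rename_i x c
        intro hxr
        have hcr : c ≠ r := h'.2
        have hxS1 : x ∈ S1 := ⟨hxr, hrest.head h'⟩
        have hcS1 : c ∈ S1 := ⟨hcr, hrest⟩
        exact (ih hcr).head ⟨h'.1, hxS1, hcS1⟩
    intro u hu
    exact main u hu.2 hu.1
  -- every vertex of the complement reaches r inside the complement
  have hB : ∀ u ∈ S1ᶜ, Relation.ReflTransGen
      (fun a b => (a, b) ∈ E ∧ a ∈ S1ᶜ ∧ b ∈ S1ᶜ) u r := by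
    have main : ∀ u, Relation.ReflTransGen (fun a b => (a, b) ∈ E) u u' → u ∉ S1 →
        Relation.ReflTransGen (fun a b => (a, b) ∈ E ∧ a ∈ S1ᶜ ∧ b ∈ S1ᶜ) u r := by
      intro u hwalk
      induction hwalk using Relation.ReflTransGen.head_induction_on with
      | refl => intro hu; exact absurd hu'S1 hu
      | head h' hrest ih =>
        rename_i x c
        intro hx
        by_cases hxr : x = r
        · subst hxr; exact Relation.ReflTransGen.refl
        · have hcS1 : c ∉ S1 := by
            intro hc
            exact hx ⟨hxr, Relation.ReflTransGen.head ⟨h', hc.1⟩ hc.2⟩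
          exact (ih hcS1).head ⟨h', hx, hcS1⟩
    intro u hu
    exact main u (hconn u u') hu
  obtain ⟨T1, hT1⟩ := exists_tree E S1 u' hu'S1 hA
  have hrS2 : r ∈ S1ᶜ := fun h => h.1 rfl
  obtain ⟨T2, hT2⟩ := exists_tree E S1ᶜ r hrS2 hB
  have hoS1 : o ∈ S1 := ⟨hor, hpath⟩
  refine ⟨r, T1, T2, S1, S1ᶜ, hru, hT1, hT2, disjoint_compl_right,
    Set.union_compl_self S1, ?_⟩
  rcases hcase with ⟨h1, h2⟩ | ⟨h1, h2⟩
  · exact Or.inr ⟨h1 ▸ hrS2, h2 ▸ hoS1⟩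
  · exact Or.inl ⟨h2 ▸ hoS1, h1 ▸ hrS2⟩
end

section
/- Let SR ∈ ℝ^{M×M} be invertible, L the associated generalized Laplacian on M ∪ {𝟎} (with M×M block SR, 𝟎-row −𝟙ᵀ(SR) on M, zero 𝟎-column), and μ = e_𝟎 its stationary distribution. For m ∈ M consider the perturbation of the edge (𝟎, m): L(ε) = L + ε(E_{m𝟎} − E_{𝟎𝟎}). Then the response vector δ = dμ(ε)/dε|_{ε=0} restricted to the coordinates in M equals −(SR)^{−1} e_m. -/
/-! The rows of `L(ε)^{(𝟎)} μ(ε) = e_𝟎` indexed by `M` read `A μ_M(ε) + ε μ_𝟎(ε) e_m = 0`.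
At `ε = 0` invertibility of `A` forces `μ_M(0) = 0`, so the all-ones row gives `μ_𝟎(0) = 1`;
differentiating at `0` then yields `A δ_M + e_m = 0`. -/

/-- The generalized Laplacian on `Option M` (`none = 𝟎`) built from a square
matrix `A`: `M × M` block `A`, `𝟎`-row on `M` the negative column sums of `A`,
zero `𝟎`-column. -/
def extL {M : Type*} [Fintype M] (A : Matrix M M ℝ) :
    Matrix (Option M) (Option M) ℝ :=
  fun i j =>
    match i, j with
    | none, none => 0
    | none, some m => -∑ m' : M, A m' m
    | some _, none => 0
    | some m, some m' => A m m'

open Matrix Filter Topology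

theorem updateRow_one_mulVec_self {n α : Type*} [Fintype n] [DecidableEq n] [Semiring α]
    (B : Matrix n n α) (i : n) (v : n → α) :
    (B.updateRow i 1 *ᵥ v) i = ∑ j, v j := by
  rw [updateRow_mulVec, Function.update_self, one_dotProduct]

theorem hasDerivAt_mulVec {𝕜 m n : Type*} [NontriviallyNormedField 𝕜] [Fintype n]
    (A : Matrix m n 𝕜) {f : 𝕜 → n → 𝕜} {f' : n → 𝕜} {x : 𝕜} (hf : HasDerivAt f f' x) :
    HasDerivAt (fun t => A *ᵥ f t) (A *ᵥ f') x :=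
  hasDerivAt_pi.2 fun i =>
    HasDerivAt.fun_sum fun j _ => (hasDerivAt_pi.1 hf j).const_mul (A i j)

theorem hasDerivAt_comp_some {𝕜 n : Type*} [NontriviallyNormedField 𝕜] {f : 𝕜 → Option n → 𝕜}
    {f' : Option n → 𝕜} {x : 𝕜} (hf : HasDerivAt f f' x) :
    HasDerivAt (fun t j => f t (some j)) (fun j => f' (some j)) x :=
  hasDerivAt_pi.2 fun j => hasDerivAt_pi.1 hf (some j)

theorem extL_add_smul_updateRow_mulVec_some {M : Type*} [Fintype M] [DecidableEq M]
    (A : Matrix M M ℝ) (m : M) (ε : ℝ) (v : Option M → ℝ) :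
    (fun i => ((extL A + ε • (single (some m) none 1 - single none none 1)).updateRow none 1
        *ᵥ v) (some i)) =
      A *ᵥ (fun j => v (some j)) + (ε * v none) • Pi.single m 1 := by
  ext i
  rw [mulVec, dotProduct, Fintype.sum_option, updateRow_ne (Option.some_ne_none i)]
  by_cases h : i = m
  · subst h; simp [extL, mulVec, dotProduct, add_comm]
  · simp [extL, mulVec, dotProduct, h, Ne.symm h]

/-- For invertible `A = S R`, consider the perturbation of the edge `(𝟎, m)`:
`L(ε) = extL A + ε (E_{m𝟎} - E_{𝟎𝟎})`, with stationary distribution `μ(ε)`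
characterized by `L(ε)^{(𝟎)} μ(ε) = e_𝟎` (the superscript `(𝟎)` replaces the
`𝟎`-row by all ones). The response `δ = dμ(ε)/dε|₀`, restricted to the
coordinates in `M`, equals `-A⁻¹ e_m`. -/
theorem stmt17 {M : Type*} [Fintype M] [DecidableEq M] (A : Matrix M M ℝ)
    (hA : IsUnit A.det) (m : M)
    (μ : ℝ → Option M → ℝ) (δ : Option M → ℝ)
    (hμ : ∀ᶠ ε in nhds (0 : ℝ),
      ((extL A + ε • (Matrix.single (some m) (none : Option M) (1 : ℝ) -
          Matrix.single (none : Option M) (none : Option M) (1 : ℝ))).updateRow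
          none (1 : Option M → ℝ)).mulVec (μ ε) = Pi.single (none : Option M) 1)
    (hδ : HasDerivAt μ δ 0) :
    (fun m' : M => δ (some m')) = -A⁻¹.mulVec (Pi.single m 1) := by
  have := invertibleOfIsUnitDet A hA
  have hrows : (fun ε => A *ᵥ (fun j => μ ε (some j)) + (ε * μ ε none) • Pi.single m 1)
      =ᶠ[𝓝 0] fun _ => 0 :=
    hμ.mono fun ε h => by
      dsimp only
      rw [← extL_add_smul_updateRow_mulVec_some, h]
      ext i
      simp
  have hμ0 : μ 0 none = 1 := by
    have hM : (fun j => μ 0 (some j)) = 0 :=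
      mulVec_injective_of_invertible A <| by simpa using hrows.self_of_nhds
    have hsum := congrFun hμ.self_of_nhds none
    rw [updateRow_one_mulVec_self, Fintype.sum_option] at hsum
    simpa [funext_iff.1 hM] using hsum
  have hderiv := (hasDerivAt_mulVec A (hasDerivAt_comp_some hδ)).add
    (((hasDerivAt_id (0 : ℝ)).mul (hasDerivAt_pi.1 hδ none)).smul_const (Pi.single m (1 : ℝ)))
  have hresp : A *ᵥ (fun j => δ (some j)) = -Pi.single m 1 := by
    have := (hderiv.congr_of_eventuallyEq hrows.symm).unique (hasDerivAt_const (0 : ℝ) 0)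
    simpa [hμ0, eq_neg_iff_add_eq_zero] using this
  rw [← mulVec_neg, inv_mulVec_eq_vec hresp.symm]
end
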